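/- arXiv:2511.17719 — 7 statements merged into one kernel-verified Lean document; each statement's English description precedes it below -/
import Mathlib

section
/- Let S be a set of subgroups of a group G that is intersection independent (no member contains the intersection of the others) and suppose S contains a cyclic subgroup of prime power order. Then |S| ≤ 2. -/
/-- In a finite cyclic group, if `orderOf a ∣ orderOf b` then `a ∈ zpowers b`. -/
lemma aux_mem_zpowers_of_orderOf_dvd {α : Type*} [Group α] [Finite α] [IsCyclic α]
    {a b : α} (h : orderOf a ∣ orderOf b) : a ∈ Subgroup.zpowers b := by
  classical
  cases nonempty_fintype α
  have hb : 0 < orderOf b := (isOfFinOrder_of_finite b).orderOf_pos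
  have hle := IsCyclic.card_pow_eq_one_le (α := α) hb
  -- zpowers b is contained in the set of n-th roots of 1 where n = orderOf b
  set T : Finset α := {x : α | x ^ orderOf b = 1} with hT
  have hsub : ((Subgroup.zpowers b : Subgroup α) : Set α).toFinset ⊆ T := by
    intro x hx
    simp only [Set.mem_toFinset, SetLike.mem_coe, Subgroup.mem_zpowers_iff] at hx
    obtain ⟨k, rfl⟩ := hx
    simp only [hT, Finset.mem_filter, Finset.mem_univ, true_and, Finset.mem_coe]
    have : (b ^ orderOf b : α) = 1 := pow_orderOf_eq_one b
    simpa [← zpow_natCast, ← zpow_mul, mul_comm] using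
      (by rw [zpow_mul, zpow_natCast, this, one_zpow] : (b : α) ^ ((orderOf b : ℤ) * k) = 1)
  have hcard : ((Subgroup.zpowers b : Subgroup α) : Set α).toFinset.card = orderOf b := by
    rw [Set.toFinset_card]
    simpa using Nat.card_zpowers b
  have heq : ((Subgroup.zpowers b : Subgroup α) : Set α).toFinset = T :=
    Finset.eq_of_subset_of_card_le hsub (by rw [hcard]; exact hle)
  have ha : a ∈ T := by
    simp only [hT, Finset.mem_filter, Finset.mem_univ, true_and]
    obtain ⟨c, hc⟩ := h
    rw [hc, pow_mul, pow_orderOf_eq_one, one_pow]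
  rw [← heq] at ha
  simpa using ha

/-- Every subgroup of a cyclic group equals `zpowers` of some element. -/
lemma aux_eq_zpowers {α : Type*} [Group α] [IsCyclic α] (A : Subgroup α) :
    ∃ a : α, A = Subgroup.zpowers a := by
  obtain ⟨⟨a, haA⟩, hgen⟩ := IsCyclic.exists_generator (α := ↥A)
  refine ⟨a, le_antisymm ?_ ?_⟩
  · intro x hx
    obtain ⟨k, hk⟩ := hgen ⟨x, hx⟩
    exact ⟨k, congrArg Subtype.val hk⟩
  · exact Subgroup.zpowers_le.mpr haA

/-- Subgroups of a finite cyclic group of prime power order are totally ordered. -/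
lemma aux_chain {α : Type*} [Group α] [Finite α] [IsCyclic α]
    {p k : ℕ} (hp : p.Prime) (hcard : Nat.card α = p ^ k)
    (A B : Subgroup α) : A ≤ B ∨ B ≤ A := by
  obtain ⟨a, rfl⟩ := aux_eq_zpowers A
  obtain ⟨b, rfl⟩ := aux_eq_zpowers B
  have ha : orderOf a ∣ p ^ k := hcard ▸ orderOf_dvd_natCard a
  have hb : orderOf b ∣ p ^ k := hcard ▸ orderOf_dvd_natCard b
  obtain ⟨i, hi, hia⟩ := (Nat.dvd_prime_pow hp).mp ha
  obtain ⟨j, hj, hjb⟩ := (Nat.dvd_prime_pow hp).mp hb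
  rcases le_total i j with hij | hij
  · exact Or.inl (Subgroup.zpowers_le.mpr
      (aux_mem_zpowers_of_orderOf_dvd (by rw [hia, hjb]; exact pow_dvd_pow p hij)))
  · exact Or.inr (Subgroup.zpowers_le.mpr
      (aux_mem_zpowers_of_orderOf_dvd (by rw [hia, hjb]; exact pow_dvd_pow p hij)))

/-- If a set of intersection independent subgroups of a group contains a
cyclic subgroup of prime power order, then it has at most 2 elements. -/
theorem stmt_0 {G : Type*} [Group G] [DecidableEq (Subgroup G)] (S : Finset (Subgroup G))
    (hind : ∀ H ∈ S, ¬ (⨅ K ∈ S.erase H, K) ≤ H)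
    (H₀ : Subgroup G) (hH₀ : H₀ ∈ S) (hcyc : IsCyclic ↥H₀)
    (hpp : ∃ p k : ℕ, p.Prime ∧ Nat.card ↥H₀ = p ^ k) :
    S.card ≤ 2 := by
  obtain ⟨p, k, hp, hcard⟩ := hpp
  have hfin : Finite ↥H₀ := Nat.finite_of_card_ne_zero (by
    rw [hcard]; exact (pow_pos hp.pos k).ne')
  by_contra hS
  push_neg at hS
  -- get two elements of S distinct from H₀ and from each other
  have h2 : 1 < (S.erase H₀).card := by
    have := Finset.card_erase_of_mem hH₀
    omega
  obtain ⟨H₁, h1m, H₂, h2m, hne⟩ := Finset.one_lt_card.mp h2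
  have h1S : H₁ ∈ S := Finset.mem_of_mem_erase h1m
  have h2S : H₂ ∈ S := Finset.mem_of_mem_erase h2m
  have h10 : H₁ ≠ H₀ := Finset.ne_of_mem_erase h1m
  have h20 : H₂ ≠ H₀ := Finset.ne_of_mem_erase h2m
  set A₁ : Subgroup G := ⨅ K ∈ S.erase H₁, K with hA₁
  set A₂ : Subgroup G := ⨅ K ∈ S.erase H₂, K with hA₂
  have hA₁H₀ : A₁ ≤ H₀ :=
    biInf_le _ (Finset.mem_erase.mpr ⟨h10.symm, hH₀⟩)
  have hA₂H₀ : A₂ ≤ H₀ :=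
    biInf_le _ (Finset.mem_erase.mpr ⟨h20.symm, hH₀⟩)
  have hA₂H₁ : A₂ ≤ H₁ :=
    biInf_le _ (Finset.mem_erase.mpr ⟨hne, h1S⟩)
  have hA₁H₂ : A₁ ≤ H₂ :=
    biInf_le _ (Finset.mem_erase.mpr ⟨hne.symm, h2S⟩)
  -- compare the two intersections inside H₀
  have hcomp := aux_chain hp hcard (A₁.subgroupOf H₀) (A₂.subgroupOf H₀)
  have key : ∀ {X Y : Subgroup G}, X ≤ H₀ → Y ≤ H₀ →
      X.subgroupOf H₀ ≤ Y.subgroupOf H₀ → X ≤ Y := by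
    intro X Y hX hY h x hx
    exact h (show (⟨x, hX hx⟩ : ↥H₀) ∈ X.subgroupOf H₀ from hx)
  rcases hcomp with h | h
  · exact hind H₁ h1S (le_trans (key hA₁H₀ hA₂H₀ h) hA₂H₁)
  · exact hind H₂ h2S (le_trans (key hA₂H₀ hA₁H₀ h) hA₁H₂)
end

section
/- Let G be the group C4 ⋊ C4 = ⟨a, b | a^4 = b^4 = 1, b a b⁻¹ = a³⟩. Every set of intersection independent subgroups of G has size at most 2. -/
theorem machinery {G : Type*} [Group G] (a b : G)
    (ha : a ^ 4 = 1) (hb : b ^ 4 = 1) (hr : b * a * b⁻¹ = a ^ 3)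
    (hgen : Subgroup.closure {a, b} = ⊤) (hcard : Nat.card G = 16) :
    ∃ par : G → ZMod 2 × ZMod 2,
      (∀ x y, par (x * y) = par x + par y) ∧
      (∀ x, par x = 0 ↔ (x = 1 ∨ x = a ^ 2 ∨ x = b ^ 2 ∨ x = a ^ 2 * b ^ 2)) ∧
      (∀ x, par x = (1, 0) → x * x = a ^ 2) ∧
      (∀ x, par x ≠ 0 → par x ≠ (1, 0) → x * x = b ^ 2) ∧
      (a ^ 2 ≠ 1 ∧ b ^ 2 ≠ 1 ∧ a ^ 2 ≠ b ^ 2 ∧ a ^ 2 * b ^ 2 ≠ 1 ∧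
        a ^ 2 * b ^ 2 ≠ a ^ 2 ∧ a ^ 2 * b ^ 2 ≠ b ^ 2) ∧
      (a ^ 2 * (a ^ 2 * b ^ 2) = b ^ 2 ∧ b ^ 2 * (a ^ 2 * b ^ 2) = a ^ 2) := by
  have haM : ∀ m : ℕ, a ^ (m % 4) = a ^ m := by
    intro m
    conv_rhs => rw [← Nat.div_add_mod m 4]
    rw [pow_add, pow_mul, ha, one_pow, one_mul]
  have hbM : ∀ m : ℕ, b ^ (m % 4) = b ^ m := by
    intro m
    conv_rhs => rw [← Nat.div_add_mod m 4]
    rw [pow_add, pow_mul, hb, one_pow, one_mul]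
  have hba : b * a = a ^ 3 * b := by
    rw [← hr]; group
  have hbak : ∀ k : ℕ, b * a ^ k = a ^ (3 * k) * b := by
    intro k
    induction k with
    | zero => simp
    | succ k ih =>
      rw [pow_succ, ← mul_assoc, ih, mul_assoc, hba, Nat.mul_succ, pow_add, mul_assoc]
  have hbja : ∀ j k : ℕ, b ^ j * a ^ k = a ^ (3 ^ j * k) * b ^ j := by
    intro j
    induction j with
    | zero => simp
    | succ j ih =>
      intro k
      have hE : 3 ^ j * (3 * k) = 3 ^ (j + 1) * k := by ring
      rw [pow_succ, mul_assoc, hbak, ← mul_assoc, ih, hE, mul_assoc]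
  -- multiplication formula
  have hmulf : ∀ i j k l : ℕ, (a ^ i * b ^ j) * (a ^ k * b ^ l)
      = a ^ (i + 3 ^ j * k) * b ^ (j + l) := by
    intro i j k l
    rw [mul_assoc, ← mul_assoc (b ^ j), hbja, pow_add, pow_add]
    group
  -- the whole group is covered by normal forms
  have hsurj : ∀ g : G, ∃ i j : ℕ, a ^ i * b ^ j = g := by
    intro g
    let T : Subgroup G :=
      { carrier := {g | ∃ i j : ℕ, a ^ i * b ^ j = g}
        one_mem' := ⟨0, 0, by simp⟩
        mul_mem' := by
          rintro x y ⟨i, j, rfl⟩ ⟨k, l, rfl⟩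
          exact ⟨i + 3 ^ j * k, j + l, (hmulf i j k l).symm⟩
        inv_mem' := by
          rintro x ⟨i, j, rfl⟩
          refine ⟨3 ^ (3 * j) * (3 * i), 3 * j, ?_⟩
          have h34 : ∃ t, 3 ^ (4 * j) = 4 * t + 1 := by
            induction j with
            | zero => exact ⟨0, rfl⟩
            | succ m ih =>
              obtain ⟨t, ht⟩ := ih
              exact ⟨81 * t + 20, by rw [show 4 * (m+1) = 4*m + 4 by ring, pow_add, ht]; ring⟩
          obtain ⟨t, ht⟩ := h34
          have h1 : (a ^ i * b ^ j) * (a ^ (3 ^ (3 * j) * (3 * i)) * b ^ (3 * j)) = 1 := by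
            rw [hmulf]
            have e1 : i + 3 ^ j * (3 ^ (3 * j) * (3 * i)) = 4 * (i + 3 * t * i) := by
              rw [show 3 ^ j * (3 ^ (3 * j) * (3 * i)) = 3 ^ (4 * j) * (3 * i) by ring, ht]
              ring
            have e2 : j + 3 * j = 4 * j := by ring
            rw [e1, e2, pow_mul, pow_mul, ha, hb, one_pow, one_pow, one_mul]
          exact eq_inv_of_mul_eq_one_right h1 }
    have hle : (⊤ : Subgroup G) ≤ T := by
      rw [← hgen]
      refine (Subgroup.closure_le T).mpr ?_
      intro x hx
      simp only [Set.mem_insert_iff, Set.mem_singleton_iff] at hx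
      rcases hx with rfl | rfl
      · exact ⟨1, 0, by simp⟩
      · exact ⟨0, 1, by simp⟩
    exact hle (Subgroup.mem_top g)
  -- bijectivity of the normal form map
  set f : Fin 4 × Fin 4 → G := fun p => a ^ (p.1 : ℕ) * b ^ (p.2 : ℕ) with hf
  have hfsurj : Function.Surjective f := by
    intro g
    obtain ⟨i, j, hij⟩ := hsurj g
    refine ⟨(⟨i % 4, Nat.mod_lt _ (by norm_num)⟩, ⟨j % 4, Nat.mod_lt _ (by norm_num)⟩), ?_⟩
    simp only [hf]
    rw [haM, hbM, hij]
  have hfbij : Function.Bijective f := by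
    rw [Nat.bijective_iff_surjective_and_card]
    refine ⟨hfsurj, ?_⟩
    rw [hcard, Nat.card_prod]
    simp
  have hfinj : Function.Injective f := hfbij.injective
  set e : (Fin 4 × Fin 4) ≃ G := Equiv.ofBijective f hfbij with he
  have hef : ∀ p, e p = f p := fun p => rfl
  have hcoords : ∀ p, e.symm (f p) = p := by
    intro p
    rw [← hef, Equiv.symm_apply_apply]
  have hxf : ∀ x : G, f (e.symm x) = x := by
    intro x
    rw [← hef, Equiv.apply_symm_apply]
  -- small cast helpers
  have hc2 : ∀ n : ℕ, ((n : ZMod 2) = 0 ↔ n % 2 = 0) ∧ ((n : ZMod 2) = 1 ↔ n % 2 = 1) := by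
    intro n
    rw [← ZMod.natCast_mod n 2]
    have h2 : n % 2 < 2 := Nat.mod_lt _ (by norm_num)
    set m := n % 2 with hm
    interval_cases m <;> simp
  have hcmod4 : ∀ n : ℕ, ((n % 4 : ℕ) : ZMod 2) = (n : ZMod 2) := by
    intro n
    rw [← ZMod.natCast_mod (n % 4) 2, Nat.mod_mod_of_dvd _ (by norm_num), ZMod.natCast_mod]
  -- multiplication at the Fin level
  have hF : ∀ p q : Fin 4 × Fin 4, f p * f q =
      f (⟨((p.1 : ℕ) + 3 ^ (p.2 : ℕ) * (q.1 : ℕ)) % 4, by omega⟩,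
         ⟨((p.2 : ℕ) + (q.2 : ℕ)) % 4, by omega⟩) := by
    intro p q
    simp only [hf]
    rw [haM, hbM, hmulf]
  -- the parity map
  refine ⟨fun g => ((((e.symm g).1 : ℕ) : ZMod 2), (((e.symm g).2 : ℕ) : ZMod 2)),
    ?_, ?_, ?_, ?_, ?_, ?_⟩
  · -- multiplicativity
    intro x y
    obtain ⟨p, rfl⟩ := hfsurj x
    obtain ⟨q, rfl⟩ := hfsurj y
    beta_reduce
    rw [hF, hcoords, hcoords, hcoords]
    simp only [Prod.mk_add_mk, Prod.mk.injEq]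
    constructor
    · rw [hcmod4]
      push_cast
      rw [show (3 : ZMod 2) = 1 by decide, one_pow, one_mul]
    · rw [hcmod4]
      push_cast
      ring
  · -- zero iff central-ish
    intro x
    obtain ⟨p, rfl⟩ := hfsurj x
    beta_reduce
    rw [hcoords]
    obtain ⟨⟨i, hi⟩, ⟨j, hj⟩⟩ := p
    simp only
    rw [show ((0 : ZMod 2 × ZMod 2)) = ((0 : ZMod 2), (0 : ZMod 2)) from rfl, Prod.mk.injEq,
      (hc2 i).1, (hc2 j).1]
    simp only [hf]
    constructor
    · rintro ⟨hi2, hj2⟩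
      have hcases : (i = 0 ∨ i = 2) ∧ (j = 0 ∨ j = 2) := by omega
      obtain ⟨hi0 | hi0, hj0 | hj0⟩ := hcases <;> subst hi0 <;> subst hj0 <;> simp <;> tauto
    · intro hor
      have h00 : (1 : G) = a ^ 0 * b ^ 0 := by simp
      have h20 : a ^ 2 = a ^ 2 * b ^ 0 := by simp
      have h02 : b ^ 2 = a ^ 0 * b ^ 2 := by simp
      have key : ∀ (k l : ℕ) (hk : k < 4) (hl : l < 4),
          a ^ i * b ^ j = a ^ k * b ^ l → i = k ∧ j = l := by
        intro k l hk hl hkl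
        have := hfinj (a₁ := (⟨i, hi⟩, ⟨j, hj⟩)) (a₂ := (⟨k, hk⟩, ⟨l, hl⟩)) (by simpa [hf] using hkl)
        simpa [Prod.ext_iff, Fin.ext_iff] using this
      rcases hor with h | h | h | h
      · obtain ⟨rfl, rfl⟩ := key 0 0 (by norm_num) (by norm_num) (h.trans h00); omega
      · obtain ⟨rfl, rfl⟩ := key 2 0 (by norm_num) (by norm_num) (h.trans h20); omega
      · obtain ⟨rfl, rfl⟩ := key 0 2 (by norm_num) (by norm_num) (h.trans h02); omega
      · obtain ⟨rfl, rfl⟩ := key 2 2 (by norm_num) (by norm_num) h; omega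
  · -- square is a² when parity (1,0)
    intro x hpx
    obtain ⟨p, rfl⟩ := hfsurj x
    beta_reduce at hpx ⊢
    rw [hcoords] at hpx
    have hsq : f p * f p = f (⟨((p.1 : ℕ) + 3 ^ (p.2 : ℕ) * (p.1 : ℕ)) % 4, by omega⟩,
        ⟨((p.2 : ℕ) + (p.2 : ℕ)) % 4, by omega⟩) := by rw [hF]
    rw [Prod.ext_iff] at hpx
    obtain ⟨hp1, hp2⟩ := hpx
    simp only at hp1 hp2
    obtain ⟨⟨i, hi⟩, ⟨j, hj⟩⟩ := p
    simp only at hp1 hp2 hsq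
    rw [(hc2 i).2] at hp1
    rw [(hc2 j).1] at hp2
    rw [hsq]
    simp only [hf]
    have hcases : (i = 1 ∨ i = 3) ∧ (j = 0 ∨ j = 2) := by omega
    obtain ⟨hi0 | hi0, hj0 | hj0⟩ := hcases <;> subst hi0 <;> subst hj0 <;> norm_num
  · -- square is b² otherwise
    intro x hpx0 hpx1
    obtain ⟨p, rfl⟩ := hfsurj x
    beta_reduce at hpx0 hpx1 ⊢
    rw [hcoords] at hpx0 hpx1
    have hsq : f p * f p = f (⟨((p.1 : ℕ) + 3 ^ (p.2 : ℕ) * (p.1 : ℕ)) % 4, by omega⟩,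
        ⟨((p.2 : ℕ) + (p.2 : ℕ)) % 4, by omega⟩) := by rw [hF]
    obtain ⟨⟨i, hi⟩, ⟨j, hj⟩⟩ := p
    have hj2 : j % 2 = 1 := by
      by_contra hc
      have hj0 : (j : ZMod 2) = 0 := (hc2 j).1.mpr (by omega)
      rcases Nat.even_or_odd i with hie | hio
      · rw [Nat.even_iff] at hie
        exact hpx0 (show (((i : ℕ) : ZMod 2), ((j : ℕ) : ZMod 2)) = ((0 : ZMod 2), (0 : ZMod 2)) by
          rw [(hc2 i).1.mpr hie, hj0])
      · rw [Nat.odd_iff] at hio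
        exact hpx1 (show (((i : ℕ) : ZMod 2), ((j : ℕ) : ZMod 2)) = ((1 : ZMod 2), (0 : ZMod 2)) by
          rw [(hc2 i).2.mpr hio, hj0])
    rw [hsq]
    simp only [hf]
    have hcases : (i = 0 ∨ i = 1 ∨ i = 2 ∨ i = 3) ∧ (j = 1 ∨ j = 3) := by omega
    obtain ⟨hi0 | hi0 | hi0 | hi0, hj0 | hj0⟩ := hcases <;> subst hi0 <;> subst hj0 <;> norm_num
  · -- distinctness
    have key : ∀ (i j k l : ℕ) (hi : i < 4) (hj : j < 4) (hk : k < 4) (hl : l < 4),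
        ¬(i = k ∧ j = l) → a ^ i * b ^ j ≠ a ^ k * b ^ l := by
      intro i j k l hi hj hk hl hne hkl
      have := hfinj (a₁ := (⟨i, hi⟩, ⟨j, hj⟩)) (a₂ := (⟨k, hk⟩, ⟨l, hl⟩)) (by simpa [hf] using hkl)
      rw [Prod.ext_iff, Fin.ext_iff, Fin.ext_iff] at this
      exact hne this
    have h00 : (1 : G) = a ^ 0 * b ^ 0 := by simp
    have h20 : (a ^ 2 : G) = a ^ 2 * b ^ 0 := by simp
    have h02 : (b ^ 2 : G) = a ^ 0 * b ^ 2 := by simp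
    refine ⟨?_, ?_, ?_, ?_, ?_, ?_⟩
    · exact fun h => key 2 0 0 0 (by norm_num) (by norm_num) (by norm_num) (by norm_num)
        (by omega) ((h20.symm.trans h).trans h00)
    · exact fun h => key 0 2 0 0 (by norm_num) (by norm_num) (by norm_num) (by norm_num)
        (by omega) ((h02.symm.trans h).trans h00)
    · exact fun h => key 2 0 0 2 (by norm_num) (by norm_num) (by norm_num) (by norm_num)
        (by omega) ((h20.symm.trans h).trans h02)
    · exact fun h => key 2 2 0 0 (by norm_num) (by norm_num) (by norm_num) (by norm_num)
        (by omega) (h.trans h00)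
    · exact fun h => key 2 2 2 0 (by norm_num) (by norm_num) (by norm_num) (by norm_num)
        (by omega) (h.trans h20)
    · exact fun h => key 2 2 0 2 (by norm_num) (by norm_num) (by norm_num) (by norm_num)
        (by omega) (h.trans h02)
  · -- the two product identities
    constructor
    · calc a ^ 2 * (a ^ 2 * b ^ 2) = a ^ 4 * b ^ 2 := by group
      _ = b ^ 2 := by rw [ha, one_mul]
    · have hcomm : b ^ 2 * a ^ 2 = a ^ 2 * b ^ 2 := by
        rw [hbja 2 2, show (3 : ℕ) ^ 2 * 2 = 18 by norm_num, ← haM 18]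
      calc b ^ 2 * (a ^ 2 * b ^ 2) = (b ^ 2 * a ^ 2) * b ^ 2 := by group
        _ = a ^ 2 * (b ^ 2 * b ^ 2) := by rw [hcomm, mul_assoc]
        _ = a ^ 2 * b ^ 4 := by group
        _ = a ^ 2 := by rw [hb, mul_one]

theorem keylemma {G : Type*} [Group G] (a b : G)
    (ha : a ^ 4 = 1) (hb : b ^ 4 = 1) (hr : b * a * b⁻¹ = a ^ 3)
    (hgen : Subgroup.closure {a, b} = ⊤) (hcard : Nat.card G = 16)
    (A B C : Subgroup G)
    (e1 : ∃ x, x ∈ B ∧ x ∈ C ∧ x ∉ A)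
    (e2 : ∃ x, x ∈ A ∧ x ∈ C ∧ x ∉ B)
    (e3 : ∃ x, x ∈ A ∧ x ∈ B ∧ x ∉ C) : False := by
  obtain ⟨par, hmul, hzero, hsqa, hsqb, ⟨d1, d2, d3, d4, d5, d6⟩, ⟨m1, m2⟩⟩ :=
    machinery a b ha hb hr hgen hcard
  have hpar1 : par 1 = 0 := (hzero 1).mpr (Or.inl rfl)
  have hself : ∀ p : ZMod 2 × ZMod 2, p + p = 0 := by decide
  have hneg : ∀ p : ZMod 2 × ZMod 2, -p = p := by decide
  have hinv : ∀ x : G, par x⁻¹ = par x := by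
    intro x
    have h := hmul x x⁻¹
    rw [mul_inv_cancel, hpar1] at h
    rw [eq_neg_of_add_eq_zero_right h.symm, hneg]
  have hdiff : ∀ x y : G, par x = par y → par (x * y⁻¹) = 0 := by
    intro x y h
    rw [hmul, hinv, h, hself]
  have hZsub : ∀ (M : Subgroup G), a ^ 2 ∈ M → b ^ 2 ∈ M → ∀ x, par x = 0 → x ∈ M := by
    intro M hMa hMb x hx
    rcases (hzero x).mp hx with rfl | rfl | rfl | rfl
    · exact one_mem M
    · exact hMa
    · exact hMb
    · exact mul_mem hMa hMb
  have htwo : ∀ (M : Subgroup G) (z w : G), z ∈ M → w ∈ M → par z = 0 → par w = 0 →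
      z ≠ 1 → w ≠ 1 → z ≠ w → a ^ 2 ∈ M ∧ b ^ 2 ∈ M := by
    intro M z w hzM hwM hz0 hw0 hz1 hw1 hzw
    rcases (hzero z).mp hz0 with rfl | rfl | rfl | rfl <;>
      rcases (hzero w).mp hw0 with rfl | rfl | rfl | rfl <;>
      first
        | exact absurd rfl hz1
        | exact absurd rfl hw1
        | exact absurd rfl hzw
        | exact ⟨hzM, hwM⟩
        | exact ⟨hwM, hzM⟩
        | exact ⟨hzM, by rw [← m1]; exact mul_mem hzM hwM⟩
        | exact ⟨hwM, by rw [← m1]; exact mul_mem hwM hzM⟩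
        | exact ⟨by rw [← m2]; exact mul_mem hzM hwM, hzM⟩
        | exact ⟨by rw [← m2]; exact mul_mem hwM hzM, hwM⟩
  have hsqne : ∀ x : G, par x ≠ 0 → x * x ≠ 1 := by
    intro x hx0 hxx
    by_cases h10 : par x = (1, 0)
    · exact d1 ((hsqa x h10).symm.trans hxx)
    · exact d2 ((hsqb x hx0 h10).symm.trans hxx)
  have hmin : ∀ (M : Subgroup G) (x : G), x ∈ M → x ≠ 1 →
      ∃ z, z ∈ M ∧ par z = 0 ∧ z ≠ 1 := by
    intro M x hxM hx1
    by_cases hx0 : par x = 0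
    · exact ⟨x, hxM, hx0, hx1⟩
    · exact ⟨x * x, mul_mem hxM hxM, by rw [hmul]; exact hself _, hsqne x hx0⟩
  -- Case 1 : two of the groups contain the Klein subgroup
  have case1 : ∀ X Y Z : Subgroup G, (a ^ 2 ∈ Y ∧ b ^ 2 ∈ Y) → (a ^ 2 ∈ Z ∧ b ^ 2 ∈ Z) →
      (∃ x, x ∈ Y ∧ x ∈ Z ∧ x ∉ X) → (∃ x, x ∈ X ∧ x ∈ Z ∧ x ∉ Y) →
      (∃ x, x ∈ X ∧ x ∈ Y ∧ x ∉ Z) → False := by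
    rintro X Y Z ⟨hYa, hYb⟩ ⟨hZa, hZb⟩ ⟨x1, hx1Y, hx1Z, hx1X⟩ ⟨x2, hx2X, hx2Z, hx2Y⟩
      ⟨x3, hx3X, hx3Y, hx3Z⟩
    have hx2p : par x2 ≠ 0 := fun h => hx2Y (hZsub Y hYa hYb x2 h)
    have hx3p : par x3 ≠ 0 := fun h => hx3Z (hZsub Z hZa hZb x3 h)
    by_cases hpp : par x2 = par x3
    · have h0 : par (x2 * x3⁻¹) = 0 := hdiff x2 x3 hpp
      have hmem : x2 * x3⁻¹ ∈ Y := hZsub Y hYa hYb _ h0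
      exact hx2Y (by simpa using mul_mem hmem hx3Y)
    · have hx23 : par (x2 * x3) = par x2 + par x3 := hmul x2 x3
      have hpicka : ∀ p q : ZMod 2 × ZMod 2, p ≠ 0 → q ≠ 0 → p ≠ q →
          (p = (1, 0) ∨ q = (1, 0) ∨ p + q = (1, 0)) := by decide
      have hpickb : ∀ p q : ZMod 2 × ZMod 2, p ≠ 0 → q ≠ 0 → p ≠ q →
          ((p ≠ 0 ∧ p ≠ (1, 0)) ∨ (q ≠ 0 ∧ q ≠ (1, 0)) ∨
            (p + q ≠ 0 ∧ p + q ≠ (1, 0))) := by decide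
      have haX : a ^ 2 ∈ X := by
        rcases hpicka _ _ hx2p hx3p hpp with h | h | h
        · rw [← hsqa x2 h]; exact mul_mem hx2X hx2X
        · rw [← hsqa x3 h]; exact mul_mem hx3X hx3X
        · rw [← hsqa (x2 * x3) (hx23.trans h)]
          exact mul_mem (mul_mem hx2X hx3X) (mul_mem hx2X hx3X)
      have hbX : b ^ 2 ∈ X := by
        rcases hpickb _ _ hx2p hx3p hpp with ⟨h0, h1⟩ | ⟨h0, h1⟩ | ⟨h0, h1⟩
        · rw [← hsqb x2 h0 h1]; exact mul_mem hx2X hx2X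
        · rw [← hsqb x3 h0 h1]; exact mul_mem hx3X hx3X
        · rw [← hsqb (x2 * x3) (fun hc => h0 (hx23.symm.trans hc))
            (fun hc => h1 (hx23.symm.trans hc))]
          exact mul_mem (mul_mem hx2X hx3X) (mul_mem hx2X hx3X)
      have hclass : ∀ r p q : ZMod 2 × ZMod 2, p ≠ 0 → q ≠ 0 → p ≠ q →
          (r = 0 ∨ r = p ∨ r = q ∨ r = p + q) := by decide
      refine hx1X ?_
      rcases hclass (par x1) _ _ hx2p hx3p hpp with h | h | h | h
      · exact hZsub X haX hbX x1 h
      · have := hZsub X haX hbX _ (hdiff x1 x2 h)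
        simpa using mul_mem this hx2X
      · have := hZsub X haX hbX _ (hdiff x1 x3 h)
        simpa using mul_mem this hx3X
      · have h2 := mul_mem (hZsub X haX hbX _ (hdiff x1 (x2 * x3) (h.trans hx23.symm)))
          (mul_mem hx2X hx3X)
        rwa [inv_mul_cancel_right] at h2
  -- Case 2 : two of the groups do not contain the Klein subgroup
  have case2 : ∀ X Y Z : Subgroup G, ¬(a ^ 2 ∈ Y ∧ b ^ 2 ∈ Y) → ¬(a ^ 2 ∈ Z ∧ b ^ 2 ∈ Z) →
      (∃ x, x ∈ Y ∧ x ∈ Z ∧ x ∉ X) → (∃ x, x ∈ X ∧ x ∈ Z ∧ x ∉ Y) → False := by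
    rintro X Y Z hnY hnZ ⟨x1, hx1Y, hx1Z, hx1X⟩ ⟨x2, hx2X, hx2Z, hx2Y⟩
    have hne1 : x1 ≠ 1 := fun h => hx1X (h ▸ one_mem X)
    have hne2 : x2 ≠ 1 := fun h => hx2Y (h ▸ one_mem Y)
    obtain ⟨z1, hz1, hz10, hz11⟩ :=
      hmin (Y ⊓ Z) x1 (Subgroup.mem_inf.mpr ⟨hx1Y, hx1Z⟩) hne1
    obtain ⟨z2, hz2, hz20, hz21⟩ :=
      hmin (X ⊓ Z) x2 (Subgroup.mem_inf.mpr ⟨hx2X, hx2Z⟩) hne2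
    obtain ⟨hz1Y, hz1Z⟩ := Subgroup.mem_inf.mp hz1
    obtain ⟨hz2X, hz2Z⟩ := Subgroup.mem_inf.mp hz2
    have hz12 : z1 = z2 := by
      by_contra hc
      exact hnZ (htwo Z z1 z2 hz1Z hz2Z hz10 hz20 hz11 hz21 hc)
    have hz1X : z1 ∈ X := hz12 ▸ hz2X
    have hYsmall : ∀ w : G, w ∈ Y → par w = 0 → w = 1 ∨ w = z1 := by
      intro w hwY hw0
      by_contra hc
      push_neg at hc
      exact hnY (htwo Y w z1 hwY hz1Y hw0 hz10 hc.1 hz11 hc.2)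
    have hZsmall : ∀ w : G, w ∈ Z → par w = 0 → w = 1 ∨ w = z1 := by
      intro w hwZ hw0
      by_contra hc
      push_neg at hc
      exact hnZ (htwo Z w z1 hwZ hz1Z hw0 hz10 hc.1 hz11 hc.2)
    have hx1p : par x1 ≠ 0 := by
      intro h
      rcases hYsmall x1 hx1Y h with rfl | rfl
      · exact hx1X (one_mem X)
      · exact hx1X hz1X
    have hx2p : par x2 ≠ 0 := by
      intro h
      rcases hZsmall x2 hx2Z h with rfl | rfl
      · exact hx2Y (one_mem Y)
      · exact hx2Y hz1Y
    have hux1 : x1 * x1 = z1 := by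
      rcases hYsmall (x1 * x1) (mul_mem hx1Y hx1Y) (by rw [hmul]; exact hself _) with h | h
      · exact absurd h (hsqne x1 hx1p)
      · exact h
    have hux2 : x2 * x2 = z1 := by
      rcases hZsmall (x2 * x2) (mul_mem hx2Z hx2Z) (by rw [hmul]; exact hself _) with h | h
      · exact absurd h (hsqne x2 hx2p)
      · exact h
    have hpp : par x1 ≠ par x2 := by
      intro h
      have h0 : par (x1 * x2⁻¹) = 0 := hdiff x1 x2 h
      have hmemZ : x1 * x2⁻¹ ∈ Z := mul_mem hx1Z (inv_mem hx2Z)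
      rcases hZsmall _ hmemZ h0 with h1 | h1
      · exact hx1X (by rw [mul_inv_eq_one.mp h1]; exact hx2X)
      · refine hx1X ?_
        have : x1 = z1 * x2 := by rw [← h1, inv_mul_cancel_right]
        rw [this]
        exact mul_mem hz1X hx2X
    by_cases h10 : par x1 = (1, 0)
    · have hza : z1 = a ^ 2 := hux1 ▸ hsqa x1 h10
      have h210 : par x2 ≠ (1, 0) := fun hc => hpp (h10.trans hc.symm)
      have hzb : z1 = b ^ 2 := hux2 ▸ hsqb x2 hx2p h210
      exact d3 (hza.symm.trans hzb)
    · have hzb : z1 = b ^ 2 := hux1 ▸ hsqb x1 hx1p h10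
      have h210 : par x2 ≠ (1, 0) := by
        intro hc
        have hza : z1 = a ^ 2 := hux2 ▸ hsqa x2 hc
        exact d3 (hza.symm.trans hzb)
      have hkey : ∀ p q : ZMod 2 × ZMod 2, p ≠ 0 → p ≠ (1, 0) → q ≠ 0 → q ≠ (1, 0) →
          p ≠ q → q + p = (1, 0) := by decide
      have hy10 : par (x2 * x1) = (1, 0) := by
        rw [hmul]
        exact hkey _ _ hx1p h10 hx2p h210 hpp
      have hyZ : x2 * x1 ∈ Z := mul_mem hx2Z hx1Z
      have hyy : (x2 * x1) * (x2 * x1) = a ^ 2 := hsqa _ hy10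
      have hyyZ : (x2 * x1) * (x2 * x1) ∈ Z := mul_mem hyZ hyZ
      rcases hZsmall _ hyyZ (by rw [hmul]; exact hself _) with h | h
      · exact d1 (hyy.symm.trans h)
      · exact d3 ((hyy.symm.trans h).trans hzb)
  -- dispatch
  obtain ⟨x1, hx1B, hx1C, hx1A⟩ := e1
  obtain ⟨x2, hx2A, hx2C, hx2B⟩ := e2
  obtain ⟨x3, hx3A, hx3B, hx3C⟩ := e3
  by_cases hA : a ^ 2 ∈ A ∧ b ^ 2 ∈ A <;> by_cases hB : a ^ 2 ∈ B ∧ b ^ 2 ∈ B <;>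
    by_cases hC : a ^ 2 ∈ C ∧ b ^ 2 ∈ C
  · exact case1 A B C hB hC ⟨x1, hx1B, hx1C, hx1A⟩ ⟨x2, hx2A, hx2C, hx2B⟩ ⟨x3, hx3A, hx3B, hx3C⟩
  · exact case1 C A B hA hB ⟨x3, hx3A, hx3B, hx3C⟩ ⟨x1, hx1C, hx1B, hx1A⟩ ⟨x2, hx2C, hx2A, hx2B⟩
  · exact case1 B A C hA hC ⟨x2, hx2A, hx2C, hx2B⟩ ⟨x1, hx1B, hx1C, hx1A⟩ ⟨x3, hx3B, hx3A, hx3C⟩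
  · exact case2 A B C hB hC ⟨x1, hx1B, hx1C, hx1A⟩ ⟨x2, hx2A, hx2C, hx2B⟩
  · exact case1 A B C hB hC ⟨x1, hx1B, hx1C, hx1A⟩ ⟨x2, hx2A, hx2C, hx2B⟩ ⟨x3, hx3A, hx3B, hx3C⟩
  · exact case2 B A C hA hC ⟨x2, hx2A, hx2C, hx2B⟩ ⟨x1, hx1B, hx1C, hx1A⟩
  · exact case2 C A B hA hB ⟨x3, hx3A, hx3B, hx3C⟩ ⟨x1, hx1C, hx1B, hx1A⟩
  · exact case2 A B C hB hC ⟨x1, hx1B, hx1C, hx1A⟩ ⟨x2, hx2A, hx2C, hx2B⟩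

/-- In the group `C4 ⋊ C4 = ⟨a, b | a⁴ = b⁴ = 1, b a b⁻¹ = a³⟩` (of order 16),
every intersection independent set of subgroups has size at most 2. -/
theorem stmt_2 {G : Type*} [Group G] [DecidableEq (Subgroup G)] (a b : G)
    (ha : a ^ 4 = 1) (hb : b ^ 4 = 1) (hr : b * a * b⁻¹ = a ^ 3)
    (hgen : Subgroup.closure {a, b} = ⊤) (hcard : Nat.card G = 16)
    (S : Finset (Subgroup G))
    (hind : ∀ H ∈ S, ¬ (⨅ K ∈ S.erase H, K) ≤ H) :
    S.card ≤ 2 := by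
  by_contra hcard3
  push_neg at hcard3
  obtain ⟨A, hA⟩ := Finset.card_pos.mp (show 0 < S.card by omega)
  have h1 : 0 < (S.erase A).card := by
    rw [Finset.card_erase_of_mem hA]; omega
  obtain ⟨B, hB⟩ := Finset.card_pos.mp h1
  have h2 : 0 < ((S.erase A).erase B).card := by
    rw [Finset.card_erase_of_mem hB, Finset.card_erase_of_mem hA]; omega
  obtain ⟨C, hC⟩ := Finset.card_pos.mp h2
  have hBA : B ≠ A := Finset.ne_of_mem_erase hB
  have hCB : C ≠ B := Finset.ne_of_mem_erase hC
  have hCA : C ≠ A := Finset.ne_of_mem_erase (Finset.mem_of_mem_erase hC)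
  have hBS : B ∈ S := Finset.mem_of_mem_erase hB
  have hCS : C ∈ S := Finset.mem_of_mem_erase (Finset.mem_of_mem_erase hC)
  have getw : ∀ H K L : Subgroup G, H ∈ S → K ∈ S → L ∈ S → K ≠ H → L ≠ H →
      ∃ x, x ∈ K ∧ x ∈ L ∧ x ∉ H := by
    intro H K L hH hK hL hKH hLH
    have hn := hind H hH
    rw [SetLike.not_le_iff_exists] at hn
    obtain ⟨x, hx, hxH⟩ := hn
    have hmem : ∀ M ∈ S.erase H, x ∈ M := by
      simpa [Subgroup.mem_iInf] using hx
    exact ⟨x, hmem K (Finset.mem_erase.mpr ⟨hKH, hK⟩),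
      hmem L (Finset.mem_erase.mpr ⟨hLH, hL⟩), hxH⟩
  exact keylemma a b ha hb hr hgen hcard A B C
    (getw A B C hA hBS hCS hBA hCA)
    (getw B A C hBS hA hCS hBA.symm hCB)
    (getw C A B hCS hA hBS hCA.symm hCB.symm)
end

section
/- Let ω ∈ K have multiplicative order 2m (m > 1) and i ∈ K with i² = −1. Consider the dicyclic group Dic_{4m} acting on K² by a ↦ diag(ω, ω⁻¹) and b ↦ [[0, i],[i, 0]]. Then every invariant polynomial in K[x₁,x₂]^{Dic_{4m}} is a polynomial in x₁^{2m} − x₂^{2m}, (x₁x₂)², and (x₁^{2m} + x₂^{2m})x₁x₂ when m is odd, and in x₁^{2m} + x₂^{2m}, (x₁x₂)², and (x₁^{2m} − x₂^{2m})x₁x₂ when m is even. -/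
open MvPolynomial Finsupp

namespace Stmt6Aux

variable {K : Type*} [Field K]

/-- swap of a Fin 2 exponent vector -/
noncomputable def sw (d : Fin 2 →₀ ℕ) : Fin 2 →₀ ℕ := Finsupp.single 0 (d 1) + Finsupp.single 1 (d 0)

lemma sw_apply0 (d : Fin 2 →₀ ℕ) : sw d 0 = d 1 := by simp [sw, Finsupp.single_apply]
lemma sw_apply1 (d : Fin 2 →₀ ℕ) : sw d 1 = d 0 := by simp [sw, Finsupp.single_apply]

lemma fin2_eq (d : Fin 2 →₀ ℕ) : d = Finsupp.single 0 (d 0) + Finsupp.single 1 (d 1) := by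
  ext x; fin_cases x <;> simp [Finsupp.single_apply]

lemma sw_sw (d : Fin 2 →₀ ℕ) : sw (sw d) = d := by
  ext x; fin_cases x <;> simp [sw, Finsupp.single_apply]

lemma sw_eq_iff {d e : Fin 2 →₀ ℕ} : sw d = e ↔ d = sw e := by
  constructor
  · rintro rfl; rw [sw_sw]
  · rintro rfl; rw [sw_sw]

lemma degree_fin2 (d : Fin 2 →₀ ℕ) : d.degree = d 0 + d 1 := by
  rw [Finsupp.degree, ← Fin.sum_univ_two (f := fun j => d j)]
  exact Finset.sum_subset (Finset.subset_univ _)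
    (fun x _ hx => Finsupp.notMem_support_iff.mp hx)

lemma monomial_eq' (p q : ℕ) (c : K) :
    (monomial (Finsupp.single 0 p + Finsupp.single 1 q) c : MvPolynomial (Fin 2) K)
      = C c * X 0 ^ p * X 1 ^ q := by
  rw [X_pow_eq_monomial, X_pow_eq_monomial, C_apply, monomial_mul, monomial_mul]
  simp

lemma aeval_diag_monomial (u v : K) (d : Fin 2 →₀ ℕ) (c : K) :
    aeval ![C u * X 0, C v * X 1] (monomial d c)
      = (monomial d (u ^ d 0 * v ^ d 1 * c) : MvPolynomial (Fin 2) K) := by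
  rw [aeval_monomial, Finsupp.prod_fintype _ _ (fun i => pow_zero _), Fin.prod_univ_two]
  conv_rhs => rw [fin2_eq d, monomial_eq']
  simp only [Matrix.cons_val_zero, Matrix.cons_val_one, Matrix.head_cons, algebraMap_eq,
    map_mul, map_pow, Finsupp.add_apply, Finsupp.single_apply]
  simp
  ring

lemma aeval_swap_monomial (i : K) (d : Fin 2 →₀ ℕ) (c : K) :
    aeval ![C i * X 1, C i * X 0] (monomial d c)
      = (monomial (sw d) (i ^ (d 0 + d 1) * c) : MvPolynomial (Fin 2) K) := by
  rw [aeval_monomial, Finsupp.prod_fintype _ _ (fun i => pow_zero _), Fin.prod_univ_two]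
  rw [show sw d = Finsupp.single 0 (d 1) + Finsupp.single 1 (d 0) from rfl, monomial_eq']
  simp only [Matrix.cons_val_zero, Matrix.cons_val_one, Matrix.head_cons, algebraMap_eq,
    map_mul, map_pow, pow_add]
  ring

lemma coeff_aeval_diag (u v : K) (f : MvPolynomial (Fin 2) K) (d : Fin 2 →₀ ℕ) :
    coeff d (aeval ![C u * X 0, C v * X 1] f) = u ^ d 0 * v ^ d 1 * coeff d f := by
  conv_lhs => rw [← support_sum_monomial_coeff f, map_sum]
  simp_rw [aeval_diag_monomial]
  rw [coeff_sum]
  simp_rw [coeff_monomial]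
  rw [Finset.sum_ite_eq' f.support d (fun d' => u ^ d' 0 * v ^ d' 1 * coeff d' f)]
  split_ifs with h
  · rfl
  · rw [MvPolynomial.notMem_support_iff.mp h, mul_zero]

lemma coeff_aeval_swap (i : K) (f : MvPolynomial (Fin 2) K) (d : Fin 2 →₀ ℕ) :
    coeff d (aeval ![C i * X 1, C i * X 0] f) = i ^ (d 0 + d 1) * coeff (sw d) f := by
  conv_lhs => rw [← support_sum_monomial_coeff f, map_sum]
  simp_rw [aeval_swap_monomial]
  rw [coeff_sum]
  simp_rw [coeff_monomial, sw_eq_iff]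
  rw [Finset.sum_ite_eq' f.support (sw d) (fun d' => i ^ (d' 0 + d' 1) * coeff d' f)]
  rw [sw_apply0, sw_apply1, add_comm (d 1) (d 0)]
  split_ifs with h
  · rfl
  · rw [MvPolynomial.notMem_support_iff.mp h, mul_zero]




lemma pow_prod_mem (S : Subalgebra K (MvPolynomial (Fin 2) K))
    (hP : ((X 0 : MvPolynomial (Fin 2) K) * X 1) ^ 2 ∈ S) {q : ℕ} (hq : Even q) :
    ((X 0 : MvPolynomial (Fin 2) K) * X 1) ^ q ∈ S := by
  obtain ⟨r, rfl⟩ := hq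
  rw [show r + r = 2 * r by ring, pow_mul]
  exact S.pow_mem hP r

/-- generic two-step induction: sign `(-1)^(q+k)` version (for odd m) -/
lemma key_odd (m : ℕ) (S : Subalgebra K (MvPolynomial (Fin 2) K))
    (hD : (X 0 : MvPolynomial (Fin 2) K) ^ (2 * m) - X 1 ^ (2 * m) ∈ S)
    (hP : ((X 0 : MvPolynomial (Fin 2) K) * X 1) ^ 2 ∈ S)
    (hB : ((X 0 : MvPolynomial (Fin 2) K) ^ (2 * m) + X 1 ^ (2 * m)) * (X 0 * X 1) ∈ S) :
    ∀ k q : ℕ, ((X 0 : MvPolynomial (Fin 2) K) * X 1) ^ q *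
      (X 0 ^ (2 * m * k) + (-1 : MvPolynomial (Fin 2) K) ^ (q + k) * X 1 ^ (2 * m * k)) ∈ S := by
  have base0 : ∀ q : ℕ, ((X 0 : MvPolynomial (Fin 2) K) * X 1) ^ q *
      (X 0 ^ (2 * m * 0) + (-1 : MvPolynomial (Fin 2) K) ^ (q + 0) * X 1 ^ (2 * m * 0)) ∈ S := by
    intro q
    rcases Nat.even_or_odd q with hq | hq
    · rw [add_zero, hq.neg_one_pow]
      have heq : ((X 0 : MvPolynomial (Fin 2) K) * X 1) ^ q *
          (X 0 ^ (2 * m * 0) + 1 * X 1 ^ (2 * m * 0)) = (X 0 * X 1) ^ q * (1 + 1) := by ring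
      rw [heq]
      exact S.mul_mem (pow_prod_mem S hP hq) (S.add_mem S.one_mem S.one_mem)
    · rw [add_zero, hq.neg_one_pow]
      have heq : ((X 0 : MvPolynomial (Fin 2) K) * X 1) ^ q *
          (X 0 ^ (2 * m * 0) + -1 * X 1 ^ (2 * m * 0)) = 0 := by ring
      rw [heq]
      exact S.zero_mem
  have base1 : ∀ q : ℕ, ((X 0 : MvPolynomial (Fin 2) K) * X 1) ^ q *
      (X 0 ^ (2 * m * 1) + (-1 : MvPolynomial (Fin 2) K) ^ (q + 1) * X 1 ^ (2 * m * 1)) ∈ S := by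
    intro q
    rcases Nat.even_or_odd q with hq | hq
    · have hs : (-1 : MvPolynomial (Fin 2) K) ^ (q + 1) = -1 := (Even.add_one hq).neg_one_pow
      rw [hs]
      have heq : ((X 0 : MvPolynomial (Fin 2) K) * X 1) ^ q *
          (X 0 ^ (2 * m * 1) + -1 * X 1 ^ (2 * m * 1)) =
          (X 0 * X 1) ^ q * (X 0 ^ (2 * m) - X 1 ^ (2 * m)) := by ring
      rw [heq]
      exact S.mul_mem (pow_prod_mem S hP hq) hD
    · obtain ⟨r, rfl⟩ := hq
      have hs : (-1 : MvPolynomial (Fin 2) K) ^ (2 * r + 1 + 1) = 1 :=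
        Even.neg_one_pow ⟨r + 1, by ring⟩
      rw [hs]
      have heq : ((X 0 : MvPolynomial (Fin 2) K) * X 1) ^ (2 * r + 1) *
          (X 0 ^ (2 * m * 1) + 1 * X 1 ^ (2 * m * 1)) =
          ((X 0 * X 1) ^ 2) ^ r * ((X 0 ^ (2 * m) + X 1 ^ (2 * m)) * (X 0 * X 1)) := by ring
      rw [heq]
      exact S.mul_mem (S.pow_mem hP r) hB
  suffices h : ∀ k : ℕ, (∀ q : ℕ, ((X 0 : MvPolynomial (Fin 2) K) * X 1) ^ q *
      (X 0 ^ (2 * m * k) + (-1 : MvPolynomial (Fin 2) K) ^ (q + k) * X 1 ^ (2 * m * k)) ∈ S) ∧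
      (∀ q : ℕ, ((X 0 : MvPolynomial (Fin 2) K) * X 1) ^ q *
      (X 0 ^ (2 * m * (k+1)) + (-1 : MvPolynomial (Fin 2) K) ^ (q + (k+1)) * X 1 ^ (2 * m * (k+1))) ∈ S) by
    intro k; exact (h k).1
  intro k
  induction k with
  | zero => exact ⟨base0, base1⟩
  | succ k ih =>
    refine ⟨ih.2, fun q => ?_⟩
    have hrec : ((X 0 : MvPolynomial (Fin 2) K) * X 1) ^ q *
        (X 0 ^ (2 * m * (k + 2)) + (-1 : MvPolynomial (Fin 2) K) ^ (q + (k + 2)) * X 1 ^ (2 * m * (k + 2))) =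
        ((X 0 * X 1) ^ q * (X 0 ^ (2 * m * (k + 1)) + (-1) ^ (q + (k + 1)) * X 1 ^ (2 * m * (k + 1))))
          * (X 0 ^ (2 * m) - X 1 ^ (2 * m))
        + (X 0 * X 1) ^ (q + 2 * m) *
          (X 0 ^ (2 * m * k) + (-1) ^ ((q + 2 * m) + k) * X 1 ^ (2 * m * k)) := by
      have e1 : (-1 : MvPolynomial (Fin 2) K) ^ (q + (k + 2)) = (-1) ^ (q + k) := by
        rw [show q + (k + 2) = (q + k) + 2 by ring, pow_add]; ring
      have e2 : (-1 : MvPolynomial (Fin 2) K) ^ (q + (k + 1)) = -(-1) ^ (q + k) := by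
        rw [show q + (k + 1) = (q + k) + 1 by ring, pow_succ]; ring
      have e3 : (-1 : MvPolynomial (Fin 2) K) ^ ((q + 2 * m) + k) = (-1) ^ (q + k) := by
        have hev : (-1 : MvPolynomial (Fin 2) K) ^ (2 * m) = 1 :=
          Even.neg_one_pow (even_two_mul m)
        rw [show (q + 2 * m) + k = (q + k) + 2 * m by ring, pow_add, hev, mul_one]
      rw [show k + 2 = (k+1)+1 from rfl] at *
      rw [e1, e2, e3]
      ring
    rw [show k + 1 + 1 = k + 2 from rfl, hrec]
    exact S.add_mem (S.mul_mem (ih.2 q) hD) (ih.1 (q + 2 * m))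

/-- generic two-step induction: sign `(-1)^q` version (for even m) -/
lemma key_even (m : ℕ) (S : Subalgebra K (MvPolynomial (Fin 2) K))
    (hS1 : (X 0 : MvPolynomial (Fin 2) K) ^ (2 * m) + X 1 ^ (2 * m) ∈ S)
    (hP : ((X 0 : MvPolynomial (Fin 2) K) * X 1) ^ 2 ∈ S)
    (hD' : ((X 0 : MvPolynomial (Fin 2) K) ^ (2 * m) - X 1 ^ (2 * m)) * (X 0 * X 1) ∈ S) :
    ∀ k q : ℕ, ((X 0 : MvPolynomial (Fin 2) K) * X 1) ^ q *
      (X 0 ^ (2 * m * k) + (-1 : MvPolynomial (Fin 2) K) ^ q * X 1 ^ (2 * m * k)) ∈ S := by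
  have base0 : ∀ q : ℕ, ((X 0 : MvPolynomial (Fin 2) K) * X 1) ^ q *
      (X 0 ^ (2 * m * 0) + (-1 : MvPolynomial (Fin 2) K) ^ q * X 1 ^ (2 * m * 0)) ∈ S := by
    intro q
    rcases Nat.even_or_odd q with hq | hq
    · rw [hq.neg_one_pow]
      have heq : ((X 0 : MvPolynomial (Fin 2) K) * X 1) ^ q *
          (X 0 ^ (2 * m * 0) + 1 * X 1 ^ (2 * m * 0)) = (X 0 * X 1) ^ q * (1 + 1) := by ring
      rw [heq]
      exact S.mul_mem (pow_prod_mem S hP hq) (S.add_mem S.one_mem S.one_mem)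
    · rw [hq.neg_one_pow]
      have heq : ((X 0 : MvPolynomial (Fin 2) K) * X 1) ^ q *
          (X 0 ^ (2 * m * 0) + -1 * X 1 ^ (2 * m * 0)) = 0 := by ring
      rw [heq]
      exact S.zero_mem
  have base1 : ∀ q : ℕ, ((X 0 : MvPolynomial (Fin 2) K) * X 1) ^ q *
      (X 0 ^ (2 * m * 1) + (-1 : MvPolynomial (Fin 2) K) ^ q * X 1 ^ (2 * m * 1)) ∈ S := by
    intro q
    rcases Nat.even_or_odd q with hq | hq
    · rw [hq.neg_one_pow]
      have heq : ((X 0 : MvPolynomial (Fin 2) K) * X 1) ^ q *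
          (X 0 ^ (2 * m * 1) + 1 * X 1 ^ (2 * m * 1)) =
          (X 0 * X 1) ^ q * (X 0 ^ (2 * m) + X 1 ^ (2 * m)) := by ring
      rw [heq]
      exact S.mul_mem (pow_prod_mem S hP hq) hS1
    · obtain ⟨r, rfl⟩ := hq
      rw [Odd.neg_one_pow ⟨r, rfl⟩]
      have heq : ((X 0 : MvPolynomial (Fin 2) K) * X 1) ^ (2 * r + 1) *
          (X 0 ^ (2 * m * 1) + -1 * X 1 ^ (2 * m * 1)) =
          ((X 0 * X 1) ^ 2) ^ r * ((X 0 ^ (2 * m) - X 1 ^ (2 * m)) * (X 0 * X 1)) := by ring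
      rw [heq]
      exact S.mul_mem (S.pow_mem hP r) hD'
  suffices h : ∀ k : ℕ, (∀ q : ℕ, ((X 0 : MvPolynomial (Fin 2) K) * X 1) ^ q *
      (X 0 ^ (2 * m * k) + (-1 : MvPolynomial (Fin 2) K) ^ q * X 1 ^ (2 * m * k)) ∈ S) ∧
      (∀ q : ℕ, ((X 0 : MvPolynomial (Fin 2) K) * X 1) ^ q *
      (X 0 ^ (2 * m * (k+1)) + (-1 : MvPolynomial (Fin 2) K) ^ q * X 1 ^ (2 * m * (k+1))) ∈ S) by
    intro k; exact (h k).1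
  intro k
  induction k with
  | zero => exact ⟨base0, base1⟩
  | succ k ih =>
    refine ⟨ih.2, fun q => ?_⟩
    have e3 : (-1 : MvPolynomial (Fin 2) K) ^ (q + 2 * m) = (-1) ^ q := by
      have hev : (-1 : MvPolynomial (Fin 2) K) ^ (2 * m) = 1 :=
        Even.neg_one_pow (even_two_mul m)
      rw [pow_add, hev, mul_one]
    have hrec : ((X 0 : MvPolynomial (Fin 2) K) * X 1) ^ q *
        (X 0 ^ (2 * m * (k + 2)) + (-1 : MvPolynomial (Fin 2) K) ^ q * X 1 ^ (2 * m * (k + 2))) =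
        ((X 0 * X 1) ^ q * (X 0 ^ (2 * m * (k + 1)) + (-1) ^ q * X 1 ^ (2 * m * (k + 1))))
          * (X 0 ^ (2 * m) + X 1 ^ (2 * m))
        - (X 0 * X 1) ^ (q + 2 * m) *
          (X 0 ^ (2 * m * k) + (-1) ^ (q + 2 * m) * X 1 ^ (2 * m * k)) := by
      rw [e3]; ring
    rw [show k + 1 + 1 = k + 2 from rfl, hrec]
    exact S.sub_mem (S.mul_mem (ih.2 q) hS1) (ih.1 (q + 2 * m))




lemma term_mem_le (m : ℕ) (i : K) (hi : i ^ 2 = -1)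
    (S : Subalgebra K (MvPolynomial (Fin 2) K))
    (hkey : ∀ k q : ℕ, ((X 0 : MvPolynomial (Fin 2) K) * X 1) ^ q *
      (X 0 ^ (2 * m * k) + (-1 : MvPolynomial (Fin 2) K) ^ (q + m * k) * X 1 ^ (2 * m * k)) ∈ S)
    (p q : ℕ) (c : K) (hmod : p ≡ q [MOD 2 * m]) (hqp : q ≤ p) :
    (monomial (Finsupp.single 0 p + Finsupp.single 1 q) c
      + monomial (Finsupp.single 0 q + Finsupp.single 1 p) (i ^ (p + q) * c)
      : MvPolynomial (Fin 2) K) ∈ S := by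
  obtain ⟨k, hk⟩ : 2 * m ∣ p - q := (Nat.modEq_iff_dvd' hqp).mp hmod.symm
  have hp : p = q + 2 * m * k := by omega
  subst hp
  have hipow : i ^ ((q + 2 * m * k) + q) = (-1 : K) ^ (q + m * k) := by
    rw [show (q + 2 * m * k) + q = 2 * (q + m * k) by ring, pow_mul, hi]
  rw [hipow]
  have heq : (monomial (Finsupp.single 0 (q + 2 * m * k) + Finsupp.single 1 q) c
      + monomial (Finsupp.single 0 q + Finsupp.single 1 (q + 2 * m * k))
        ((-1 : K) ^ (q + m * k) * c) : MvPolynomial (Fin 2) K)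
      = C c * (((X 0 : MvPolynomial (Fin 2) K) * X 1) ^ q *
        (X 0 ^ (2 * m * k) + (-1 : MvPolynomial (Fin 2) K) ^ (q + m * k) * X 1 ^ (2 * m * k))) := by
    rw [monomial_eq', monomial_eq', map_mul, map_pow, map_neg, map_one]
    ring
  rw [heq]
  exact S.mul_mem (S.algebraMap_mem c) (hkey k q)

lemma term_mem (m : ℕ) (i : K) (hi : i ^ 2 = -1)
    (S : Subalgebra K (MvPolynomial (Fin 2) K))
    (hkey : ∀ k q : ℕ, ((X 0 : MvPolynomial (Fin 2) K) * X 1) ^ q *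
      (X 0 ^ (2 * m * k) + (-1 : MvPolynomial (Fin 2) K) ^ (q + m * k) * X 1 ^ (2 * m * k)) ∈ S)
    (p q : ℕ) (c : K) (hmod : p ≡ q [MOD 2 * m]) :
    (monomial (Finsupp.single 0 p + Finsupp.single 1 q) c
      + monomial (Finsupp.single 0 q + Finsupp.single 1 p) (i ^ (p + q) * c)
      : MvPolynomial (Fin 2) K) ∈ S := by
  rcases le_total q p with h | h
  · exact term_mem_le m i hi S hkey p q c hmod h
  · have h2 : p ≡ q [MOD 2] := hmod.of_dvd (dvd_mul_right 2 m)
    have heven : Even (p + q) := by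
      rw [Nat.even_add, Nat.even_iff, Nat.even_iff]
      have : p % 2 = q % 2 := h2
      omega
    have hc : i ^ (p + q) * (i ^ (p + q) * c) = c := by
      rw [← mul_assoc, ← pow_add i, show (p + q) + (p + q) = 2 * (p + q) by ring, pow_mul, hi,
        heven.neg_one_pow, one_mul]
    have key := term_mem_le m i hi S hkey q p (i ^ (p + q) * c) hmod.symm h
    rw [show i ^ (q + p) * (i ^ (p + q) * c) = c by rw [add_comm q p]; exact hc] at key
    rw [add_comm]
    exact key


lemma term_mem' (m : ℕ) (i : K) (hi : i ^ 2 = -1)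
    (S : Subalgebra K (MvPolynomial (Fin 2) K))
    (hkey : ∀ k q : ℕ, ((X 0 : MvPolynomial (Fin 2) K) * X 1) ^ q *
      (X 0 ^ (2 * m * k) + (-1 : MvPolynomial (Fin 2) K) ^ (q + m * k) * X 1 ^ (2 * m * k)) ∈ S)
    (d : Fin 2 →₀ ℕ) (c : K) (hmod : d 0 ≡ d 1 [MOD 2 * m]) :
    (monomial d c + monomial (sw d) (i ^ (d 0 + d 1) * c) : MvPolynomial (Fin 2) K) ∈ S := by
  have h := term_mem m i hi S hkey (d 0) (d 1) c hmod
  rw [← fin2_eq d] at h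
  exact h

lemma main_mem (m : ℕ) (hm : 1 < m) (h2 : (2 : K) ≠ 0) (i ω : K)
    (hi : i ^ 2 = -1) (hω : orderOf ω = 2 * m)
    (f : MvPolynomial (Fin 2) K)
    (hfa : aeval ![C ω * X 0, C ω⁻¹ * X 1] f = f)
    (hfb : aeval ![C i * X 1, C i * X 0] f = f)
    (S : Subalgebra K (MvPolynomial (Fin 2) K))
    (hkey : ∀ k q : ℕ, ((X 0 : MvPolynomial (Fin 2) K) * X 1) ^ q *
      (X 0 ^ (2 * m * k) + (-1 : MvPolynomial (Fin 2) K) ^ (q + m * k) * X 1 ^ (2 * m * k)) ∈ S) :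
    f ∈ S := by
  have hω0 : ω ≠ 0 := by
    intro h
    have h1 := pow_orderOf_eq_one ω
    rw [hω, h, zero_pow (by omega : 2 * m ≠ 0)] at h1
    exact one_ne_zero h1.symm
  set u : Kˣ := Units.mk0 ω hω0 with hu
  have hA : ∀ d : Fin 2 →₀ ℕ, coeff d f ≠ 0 → d 0 ≡ d 1 [MOD 2 * m] := by
    intro d hd
    have h1 := congrArg (coeff d) hfa
    rw [coeff_aeval_diag] at h1
    have h2' : ω ^ d 0 * ω⁻¹ ^ d 1 = 1 :=
      mul_right_cancel₀ hd (by rw [one_mul]; exact h1)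
    have h3 : ω ^ d 0 = ω ^ d 1 := by
      rw [inv_pow] at h2'
      have hne : ω ^ d 1 ≠ 0 := pow_ne_zero _ hω0
      field_simp at h2'
      exact h2'
    have h4 : u ^ d 0 = u ^ d 1 := by
      ext
      simpa [hu] using h3
    have h5 := pow_eq_pow_iff_modEq.mp h4
    rwa [show orderOf u = 2 * m by rw [← orderOf_units, hu, Units.val_mk0, hω]] at h5
  have hB : ∀ d : Fin 2 →₀ ℕ, coeff d f = i ^ (d 0 + d 1) * coeff (sw d) f := by
    intro d
    conv_lhs => rw [← hfb]
    exact coeff_aeval_swap i f d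
  rw [← sum_homogeneousComponent f]
  refine S.sum_mem (fun n _ => ?_)
  set g := homogeneousComponent n f with hg
  have hdeg : ∀ d ∈ g.support, d 0 + d 1 = n ∧ coeff d f ≠ 0 ∧ coeff d g = coeff d f := by
    intro d hd
    have hne := MvPolynomial.mem_support_iff.mp hd
    have hcg : coeff d g = if d.degree = n then coeff d f else 0 := by
      rw [hg]; exact coeff_homogeneousComponent n f d
    split_ifs at hcg with hdd
    · exact ⟨by rw [← degree_fin2]; exact hdd, by rw [← hcg]; exact hne, hcg⟩
    · exact absurd hcg hne
  have hswd : ∀ d ∈ g.support, coeff (sw d) g = coeff (sw d) f := by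
    intro d hd
    obtain ⟨hn, _, _⟩ := hdeg d hd
    rw [hg, coeff_homogeneousComponent, if_pos]
    rw [degree_fin2, sw_apply0, sw_apply1]
    omega
  have hgg : g + g = ∑ d ∈ g.support,
      ((monomial d (coeff d g) : MvPolynomial (Fin 2) K)
        + monomial (sw d) (i ^ n * coeff d g)) := by
    rw [Finset.sum_add_distrib, support_sum_monomial_coeff]
    congr 1
    conv_lhs => rw [← support_sum_monomial_coeff g]
    refine Finset.sum_nbij' (i := sw) (j := sw) ?_ ?_ (fun a _ => sw_sw a) (fun a _ => sw_sw a) ?_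
    · intro d hd
      obtain ⟨hn, hfne, hcg⟩ := hdeg d hd
      rw [MvPolynomial.mem_support_iff, hswd d hd]
      intro h0
      apply hfne
      rw [hB d, h0, mul_zero]
    · intro d hd
      obtain ⟨hn, hfne, hcg⟩ := hdeg d hd
      rw [MvPolynomial.mem_support_iff, hswd d hd]
      intro h0
      apply hfne
      rw [hB d, h0, mul_zero]
    · intro d hd
      obtain ⟨hn, hfne, hcg⟩ := hdeg d hd
      rw [sw_sw, hcg, hswd d hd, hB d, hn]
  have hmem2 : g + g ∈ S := by
    rw [hgg]
    refine S.sum_mem (fun d hd => ?_)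
    obtain ⟨hn, hfne, hcg⟩ := hdeg d hd
    rw [← hn]
    exact term_mem' m i hi S hkey d (coeff d g) (hA d hfne)
  have : (2 : K)⁻¹ • (g + g) ∈ S := S.smul_mem hmem2 _
  rwa [← two_smul K g, smul_smul, inv_mul_cancel₀ h2, one_smul] at this

end Stmt6Aux

open MvPolynomial in
/-- Generators of the invariant ring of the dicyclic group `Dic_{4m}` acting on `K²`
by `a ↦ diag(ω, ω⁻¹)`, `b ↦ [[0,i],[i,0]]`. -/
theorem stmt_6 {K : Type*} [Field K] (m : ℕ) (hm : 1 < m)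
    (hchar : ((4 * m : ℕ) : K) ≠ 0)
    (i ω : K) (hi : i ^ 2 = -1) (hω : orderOf ω = 2 * m)
    (f : MvPolynomial (Fin 2) K)
    (hfa : aeval ![C ω * X 0, C ω⁻¹ * X 1] f = f)
    (hfb : aeval ![C i * X 1, C i * X 0] f = f) :
    (Odd m → f ∈ Algebra.adjoin K
      {(X 0 : MvPolynomial (Fin 2) K) ^ (2 * m) - X 1 ^ (2 * m),
       ((X 0 : MvPolynomial (Fin 2) K) * X 1) ^ 2,
       ((X 0 : MvPolynomial (Fin 2) K) ^ (2 * m) + X 1 ^ (2 * m)) * (X 0 * X 1)}) ∧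
    (Even m → f ∈ Algebra.adjoin K
      {(X 0 : MvPolynomial (Fin 2) K) ^ (2 * m) + X 1 ^ (2 * m),
       ((X 0 : MvPolynomial (Fin 2) K) * X 1) ^ 2,
       ((X 0 : MvPolynomial (Fin 2) K) ^ (2 * m) - X 1 ^ (2 * m)) * (X 0 * X 1)}) := by
  have h2 : (2 : K) ≠ 0 := by
    intro h
    apply hchar
    push_cast
    rw [show ((4 : K)) = 2 * 2 by norm_num, h]
    ring
  constructor
  · intro hmo
    refine Stmt6Aux.main_mem m hm h2 i ω hi hω f hfa hfb _ ?_
    intro k q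
    have hsign : ((-1 : MvPolynomial (Fin 2) K)) ^ (q + m * k) = (-1) ^ (q + k) := by
      rw [pow_add, pow_add, pow_mul, Odd.neg_one_pow hmo]
    rw [hsign]
    exact Stmt6Aux.key_odd m _ (Algebra.subset_adjoin (Set.mem_insert _ _))
      (Algebra.subset_adjoin (Set.mem_insert_of_mem _ (Set.mem_insert _ _)))
      (Algebra.subset_adjoin (Set.mem_insert_of_mem _ (Set.mem_insert_of_mem _ (Set.mem_singleton _)))) k q
  · intro hme
    refine Stmt6Aux.main_mem m hm h2 i ω hi hω f hfa hfb _ ?_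
    intro k q
    have hsign : ((-1 : MvPolynomial (Fin 2) K)) ^ (q + m * k) = (-1) ^ q := by
      rw [pow_add, pow_mul, Even.neg_one_pow hme, one_pow, mul_one]
    rw [hsign]
    exact Stmt6Aux.key_even m _ (Algebra.subset_adjoin (Set.mem_insert _ _))
      (Algebra.subset_adjoin (Set.mem_insert_of_mem _ (Set.mem_insert _ _)))
      (Algebra.subset_adjoin (Set.mem_insert_of_mem _ (Set.mem_insert_of_mem _ (Set.mem_singleton _)))) k q
end

section
/- Let G = Dic_{4m} (m odd, m>1) act on K² as a ↦ diag(ρ, ρ⁻¹), b ↦ [[0,i],[i,0]] with ρ of order 2m. The vectors v = (1,1) and v' = (1,−1) lie in distinct G-orbits, and the invariant (x₁^{2m}+x₂^{2m})x₁x₂ of degree 2m+2 separates them, while the invariants x₁^{2m}−x₂^{2m} and (x₁x₂)² take equal values on v and v'. -/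
/-- For `Dic_{4m}` (`m` odd, `m > 1`) acting on `K²` by `a ↦ diag(ρ,ρ⁻¹)`,
`b ↦ [[0,i],[i,0]]`, the vectors `(1,1)` and `(1,-1)` lie in distinct orbits;
the degree `2m+2` invariant `(x₁^{2m}+x₂^{2m})x₁x₂` separates them, while
`x₁^{2m}-x₂^{2m}` and `(x₁x₂)²` take equal values on them. -/
theorem stmt_7 {K : Type*} [Field K] (m : ℕ) (hm : 1 < m) (hodd : Odd m)
    (hchar : ((4 * m : ℕ) : K) ≠ 0)
    (i ρ : K) (hi : orderOf i = 4) (hρ : orderOf ρ = 2 * m) :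
    (∀ M ∈ Submonoid.closure
        ({Matrix.of ![![ρ, 0], ![0, ρ⁻¹]], Matrix.of ![![0, i], ![i, 0]]} :
          Set (Matrix (Fin 2) (Fin 2) K)),
        M.mulVec ![1, 1] ≠ ![1, -1]) ∧
    (fun v : Fin 2 → K => (v 0 ^ (2 * m) + v 1 ^ (2 * m)) * (v 0 * v 1)) ![1, 1] ≠
      (fun v : Fin 2 → K => (v 0 ^ (2 * m) + v 1 ^ (2 * m)) * (v 0 * v 1)) ![1, -1] ∧
    (fun v : Fin 2 → K => v 0 ^ (2 * m) - v 1 ^ (2 * m)) ![1, 1] =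
      (fun v : Fin 2 → K => v 0 ^ (2 * m) - v 1 ^ (2 * m)) ![1, -1] ∧
    (fun v : Fin 2 → K => (v 0 * v 1) ^ 2) ![1, 1] =
      (fun v : Fin 2 → K => (v 0 * v 1) ^ 2) ![1, -1] := by
  have h4 : (4 : K) ≠ 0 := by
    intro h
    apply hchar
    push_cast
    rw [h, zero_mul]
  have hρ2m : ρ ^ (2 * m) = 1 := by rw [← hρ]; exact pow_orderOf_eq_one ρ
  have hρne : ρ ≠ 0 := by
    intro h
    rw [h, zero_pow (by omega)] at hρ2m
    exact zero_ne_one hρ2m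
  have hi4 : i ^ 4 = 1 := by rw [← hi]; exact pow_orderOf_eq_one i
  have hi2 : i ^ 2 = -1 := by
    have hsq : (i ^ 2) * (i ^ 2) = 1 := by rw [← pow_add]; exact hi4
    rcases mul_self_eq_one_iff.mp hsq with h | h
    · exfalso
      have := orderOf_dvd_of_pow_eq_one h
      rw [hi] at this
      omega
    · exact h
  have hneg1 : ((-1 : K)) ^ m = -1 := hodd.neg_one_pow
  have hi2m : i ^ (2 * m) = -1 := by rw [pow_mul, hi2, hneg1]
  have hev : (-1 : K) ^ (2 * m) = 1 := by
    rw [pow_mul]; simp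
  have h22 : (2 : K) ≠ -2 := by
    intro h
    apply h4
    have : (4 : K) = 2 - (-2) := by ring
    rw [this, ← h, sub_self]
  set f : (Fin 2 → K) → K := fun v => (v 0 ^ (2 * m) + v 1 ^ (2 * m)) * (v 0 * v 1)
    with hf
  have key : ∀ M ∈ Submonoid.closure
      ({Matrix.of ![![ρ, 0], ![0, ρ⁻¹]], Matrix.of ![![0, i], ![i, 0]]} :
        Set (Matrix (Fin 2) (Fin 2) K)), ∀ w : Fin 2 → K, f (M.mulVec w) = f w := by
    intro M hM
    induction hM using Submonoid.closure_induction with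
    | mem M hMem =>
      intro w
      rcases hMem with h | h
      · subst h
        have e0 : (Matrix.of ![![ρ, 0], ![0, ρ⁻¹]]).mulVec w 0 = ρ * w 0 := by
          simp [Matrix.mulVec, dotProduct, Fin.sum_univ_succ]
        have e1 : (Matrix.of ![![ρ, 0], ![0, ρ⁻¹]]).mulVec w 1 = ρ⁻¹ * w 1 := by
          simp [Matrix.mulVec, dotProduct, Fin.sum_univ_succ]
        have hρinv : (ρ⁻¹) ^ (2 * m) = 1 := by
          rw [inv_pow, hρ2m, inv_one]
        simp only [hf, e0, e1, mul_pow, hρ2m, hρinv, one_mul]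
        field_simp
      · simp only [Set.mem_singleton_iff] at h
        subst h
        have e0 : (Matrix.of ![![0, i], ![i, 0]]).mulVec w 0 = i * w 1 := by
          simp [Matrix.mulVec, dotProduct, Fin.sum_univ_succ]
        have e1 : (Matrix.of ![![0, i], ![i, 0]]).mulVec w 1 = i * w 0 := by
          simp [Matrix.mulVec, dotProduct, Fin.sum_univ_succ]
        simp only [hf, e0, e1, mul_pow, hi2m]
        have : i * w 1 * (i * w 0) = i ^ 2 * (w 0 * w 1) := by ring
        rw [this, hi2]
        ring
    | one =>
      intro w
      rw [Matrix.one_mulVec]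
    | mul M N _ _ hM hN =>
      intro w
      rw [← Matrix.mulVec_mulVec, hM, hN]
  have fval1 : f ![1, 1] = 2 := by
    simp [hf]
    norm_num
  have fval2 : f ![1, -1] = -2 := by
    simp [hf, hev]
    norm_num
  refine ⟨?_, ?_, ?_, ?_⟩
  · intro M hM heq
    have := key M hM ![1, 1]
    rw [heq, fval1, fval2] at this
    exact h22 this.symm
  · intro h
    rw [fval1, fval2] at h
    exact h22 h
  · simp [hev]
  · simp
end

section
/- Let G = A_n (n ≥ 4) act on K^n by permuting coordinates, K a field with char K ∤ n!/2 and |K| ≥ n. Then there exist v, v' ∈ K^n in distinct A_n-orbits such that every A_n-invariant polynomial of degree less than n(n−1)/2 takes the same value on v and v'. Hence β_sep(A_n, K^n) ≥ n(n−1)/2. -/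
/-- An injective function `Fin n → ℕ` has sum at least `0 + 1 + ⋯ + (n-1)`. -/
lemma sum_range_le_sum_of_injective {n : ℕ} (d : Fin n → ℕ)
    (hd : Function.Injective d) : ∑ k ∈ Finset.range n, k ≤ ∑ i, d i := by
  classical
  set s : Finset ℕ := Finset.image d Finset.univ with hs
  have hcard : s.card = n := by
    rw [hs, Finset.card_image_of_injective _ hd, Finset.card_univ, Fintype.card_fin]
  set e := s.orderEmbOfFin hcard with he
  have hmono : StrictMono e := e.strictMono
  have hle : ∀ m : ℕ, ∀ k : Fin n, (k : ℕ) = m → m ≤ e k := by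
    intro m
    induction m with
    | zero => intro k _; exact Nat.zero_le _
    | succ m ih =>
      intro k hk
      have hm : m < n := by omega
      have hlt : e ⟨m, hm⟩ < e k := hmono (by simp [Fin.lt_def, hk])
      exact Nat.succ_le_of_lt (lt_of_le_of_lt (ih ⟨m, hm⟩ rfl) hlt)
  have h1 : ∑ k ∈ Finset.range n, k = ∑ k : Fin n, (k : ℕ) :=
    (Fin.sum_univ_eq_sum_range (fun k => k) n).symm
  have h2 : ∑ i, d i = ∑ x ∈ s, x := by
    rw [hs, Finset.sum_image (fun a _ b _ h => hd h)]
  have h3 : ∑ x ∈ s, x = ∑ k : Fin n, e k := by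
    rw [← Finset.sum_attach s (fun x => x)]
    exact (Finset.sum_equiv (s.orderIsoOfFin hcard).toEquiv (by simp) (by
      intro k _
      simp [he, Finset.coe_orderIsoOfFin_apply])).symm
  rw [h1, h2, h3]
  exact Finset.sum_le_sum fun k _ => hle k k rfl

open MvPolynomial in
/-- Lower bound for the separating Noether number of `Aₙ` (`n ≥ 4`) acting on `K^n`
by permuting coordinates: there are two points in distinct `Aₙ`-orbits which cannot be
separated by invariants of degree less than `n(n-1)/2`. -/
theorem stmt_9 {K : Type*} [Field K] (n : ℕ) (hn : 4 ≤ n)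
    (hchar : ((n.factorial / 2 : ℕ) : K) ≠ 0)
    (hK : ∃ vals : Fin n → K, Function.Injective vals) :
    ∃ v v' : Fin n → K,
      (∀ σ ∈ alternatingGroup (Fin n), v ∘ ⇑σ ≠ v') ∧
      ∀ f : MvPolynomial (Fin n) K,
        (∀ σ ∈ alternatingGroup (Fin n), rename ⇑σ f = f) →
        f.totalDegree < n * (n - 1) / 2 →
        eval v f = eval v' f := by
  classical
  obtain ⟨vals, hvals⟩ := hK
  -- two distinct indices
  set i0 : Fin n := ⟨0, by omega⟩ with hi0
  set i1 : Fin n := ⟨1, by omega⟩ with hi1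
  have hne : i0 ≠ i1 := by simp [hi0, hi1, Fin.ext_iff]
  set τ : Equiv.Perm (Fin n) := Equiv.swap i0 i1 with hτdef
  have hsignτ : Equiv.Perm.sign τ = -1 := Equiv.Perm.sign_swap hne
  have hτnot : τ ∉ alternatingGroup (Fin n) := by
    rw [Equiv.Perm.mem_alternatingGroup, hsignτ]
    decide
  -- char K ≠ 2
  have h2 : (2 : K) ≠ 0 := by
    intro h2
    apply hchar
    obtain ⟨k, hk⟩ : Nat.factorial 4 ∣ Nat.factorial n := Nat.factorial_dvd_factorial hn
    have h24 : Nat.factorial 4 = 24 := by decide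
    rw [h24] at hk
    rw [show n.factorial / 2 = 2 * (6 * k) by omega]
    push_cast
    rw [h2]; ring
  refine ⟨vals, vals ∘ ⇑τ, ?_, ?_⟩
  · intro σ hσ h
    have : σ = τ := Equiv.ext fun i => hvals (congrFun h i)
    exact hτnot (this ▸ hσ)
  · intro f hf hdeg
    -- any odd permutation acts on f like τ
    have hodd : ∀ π : Equiv.Perm (Fin n), Equiv.Perm.sign π = -1 →
        rename ⇑π f = rename ⇑τ f := by
      intro π hπ
      have hρ : τ⁻¹ * π ∈ alternatingGroup (Fin n) := by
        rw [Equiv.Perm.mem_alternatingGroup]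
        simp [hπ, hsignτ]
      calc rename ⇑π f = rename ⇑(τ * (τ⁻¹ * π)) f := by
            rw [mul_inv_cancel_left]
        _ = rename (⇑τ ∘ ⇑(τ⁻¹ * π)) f := by rw [Equiv.Perm.coe_mul]
        _ = rename ⇑τ (rename ⇑(τ⁻¹ * π) f) := (rename_rename _ _ f).symm
        _ = rename ⇑τ f := by rw [hf _ hρ]
    set g : MvPolynomial (Fin n) K := f - rename ⇑τ f with hg
    -- g is alternating under any transposition
    have hg_alt : ∀ i j : Fin n, i ≠ j → rename ⇑(Equiv.swap i j) g = -g := by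
      intro i j hij
      have hsw : Equiv.Perm.sign (Equiv.swap i j) = -1 := Equiv.Perm.sign_swap hij
      have heven : Equiv.swap i j * τ ∈ alternatingGroup (Fin n) := by
        rw [Equiv.Perm.mem_alternatingGroup]
        simp [hsw, hsignτ]
      have h1 : rename ⇑(Equiv.swap i j) (rename ⇑τ f) = f := by
        rw [rename_rename, ← Equiv.Perm.coe_mul, hf _ heven]
      rw [hg, map_sub, h1, hodd _ hsw]
      ring
    -- g must be zero
    have hg0 : g = 0 := by
      by_contra hgne
      obtain ⟨d, hd⟩ := support_nonempty.mpr hgne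
      by_cases hinj : Function.Injective ⇑d
      · have hsum : (d.sum fun _ e => e) ≤ g.totalDegree := le_totalDegree hd
        have hsum' : (d.sum fun _ e => e) = ∑ i, d i :=
          Finsupp.sum_fintype _ _ fun _ => rfl
        have hlow : n * (n - 1) / 2 ≤ ∑ i, d i := by
          rw [← Finset.sum_range_id n]
          exact sum_range_le_sum_of_injective _ hinj
        have hdegg : g.totalDegree < n * (n - 1) / 2 := by
          calc g.totalDegree ≤ max f.totalDegree (rename ⇑τ f).totalDegree :=
                totalDegree_sub f _
            _ ≤ max f.totalDegree f.totalDegree := by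
                exact max_le_max le_rfl (totalDegree_rename_le _ f)
            _ = f.totalDegree := max_self _
            _ < n * (n - 1) / 2 := hdeg
        omega
      · obtain ⟨i, j, hdij, hij⟩ := Function.not_injective_iff.mp hinj
        have hmap : Finsupp.mapDomain ⇑(Equiv.swap i j) d = d := by
          ext k
          rw [Finsupp.mapDomain_equiv_apply]
          rcases eq_or_ne k i with rfl | hki
          · simp [hdij]
          · rcases eq_or_ne k j with rfl | hkj
            · simp [hdij]
            · rw [Equiv.symm_swap, Equiv.swap_apply_of_ne_of_ne hki hkj]
        have hco : coeff d (rename ⇑(Equiv.swap i j) g) = coeff d g := by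
          conv_lhs => rw [← hmap]
          exact coeff_rename_mapDomain _ (Equiv.injective _) g d
        rw [hg_alt i j hij, coeff_neg] at hco
        have : (2 : K) * coeff d g = 0 := by linear_combination -hco
        have hzero : coeff d g = 0 := by
          rcases mul_eq_zero.mp this with h | h
          · exact absurd h h2
          · exact h
        exact (mem_support_iff.mp hd) hzero
    have hfτ : rename ⇑τ f = f := (sub_eq_zero.mp hg0).symm
    conv_rhs => rw [← hfτ, eval_rename]
    have hcomp : (vals ∘ ⇑τ) ∘ ⇑τ = vals := by
      funext i
      simp [Function.comp, hτdef, Equiv.swap_apply_self]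
    rw [hcomp]
end

section
/- The invariant ring of the Pauli group (generated by [[0,1],[1,0]], [[0,−i],[i,0]], [[1,0],[0,−1]] in GL₂(K), i of order 4) acting on K[x₁,x₂] is the polynomial ring K[x₁⁴ + x₂⁴, (x₁x₂)²]. -/
namespace Pauli13
open MvPolynomial

variable {K : Type*} [Field K]

noncomputable def e (m n : ℕ) : Fin 2 →₀ ℕ := Finsupp.single 0 m + Finsupp.single 1 n

lemma e_apply_0 (m n : ℕ) : e m n 0 = m := by simp [e]
lemma e_apply_1 (m n : ℕ) : e m n 1 = n := by simp [e]

lemma eq_e (d : Fin 2 →₀ ℕ) : d = e (d 0) (d 1) := by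
  ext j; fin_cases j <;> simp [e]

lemma e_inj {m n m' n' : ℕ} : e m n = e m' n' ↔ m = m' ∧ n = n' := by
  constructor
  · intro h
    constructor
    · have := congrArg (fun d => d 0) h; simpa [e_apply_0] using this
    · have := congrArg (fun d => d 1) h; simpa [e_apply_1] using this
  · rintro ⟨rfl, rfl⟩; rfl

lemma monomial_e (m n : ℕ) (c : K) :
    (monomial (e m n) c : MvPolynomial (Fin 2) K) = C c * X 0 ^ m * X 1 ^ n := by
  rw [C_apply, X_pow_eq_monomial, X_pow_eq_monomial, monomial_mul, monomial_mul]
  simp [e]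

lemma coeff_scale (a b : K) (m n : ℕ) (f : MvPolynomial (Fin 2) K) :
    coeff (e m n) (aeval ![C a * X 0, C b * X 1] f) = a ^ m * b ^ n * coeff (e m n) f := by
  induction f using MvPolynomial.induction_on' with
  | add p q hp hq => rw [map_add, coeff_add, hp, hq, coeff_add, mul_add]
  | monomial u c =>
    obtain ⟨m', n', rfl⟩ : ∃ m' n', u = e m' n' := ⟨u 0, u 1, eq_e u⟩
    nth_rewrite 1 [monomial_e]
    simp only [map_mul, map_pow, aeval_X, aeval_C, Matrix.cons_val_zero, Matrix.cons_val_one,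
      Matrix.head_cons, MvPolynomial.algebraMap_eq]
    rw [show (C c : MvPolynomial (Fin 2) K) * (C a * X 0) ^ m' * (C b * X 1) ^ n'
        = monomial (e m' n') (c * (a ^ m' * b ^ n')) by
      rw [mul_pow, mul_pow, ← C_pow, ← C_pow, monomial_e, C_mul, C_mul]; ring]
    rw [coeff_monomial, coeff_monomial]
    by_cases h : e m' n' = e m n
    · obtain ⟨rfl, rfl⟩ := e_inj.mp h
      simp; ring
    · simp [h]

lemma coeff_swapscale (a b : K) (m n : ℕ) (f : MvPolynomial (Fin 2) K) :
    coeff (e m n) (aeval ![C a * X 1, C b * X 0] f) = a ^ n * b ^ m * coeff (e n m) f := by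
  induction f using MvPolynomial.induction_on' with
  | add p q hp hq => rw [map_add, coeff_add, hp, hq, coeff_add, mul_add]
  | monomial u c =>
    obtain ⟨m', n', rfl⟩ : ∃ m' n', u = e m' n' := ⟨u 0, u 1, eq_e u⟩
    nth_rewrite 1 [monomial_e]
    simp only [map_mul, map_pow, aeval_X, aeval_C, Matrix.cons_val_zero, Matrix.cons_val_one,
      Matrix.head_cons, MvPolynomial.algebraMap_eq]
    rw [show (C c : MvPolynomial (Fin 2) K) * (C a * X 1) ^ m' * (C b * X 0) ^ n'
        = monomial (e n' m') (c * (a ^ m' * b ^ n')) by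
      rw [mul_pow, mul_pow, ← C_pow, ← C_pow, monomial_e, C_mul, C_mul]; ring]
    rw [coeff_monomial, coeff_monomial]
    by_cases h : e n' m' = e m n
    · obtain ⟨rfl, rfl⟩ := e_inj.mp h
      simp [e_inj]; ring
    · by_cases h2 : e m' n' = e n m
      · obtain ⟨rfl, rfl⟩ := e_inj.mp h2
        exact absurd rfl h
      · simp [h, h2]

noncomputable def Adj (K : Type*) [Field K] : Subalgebra K (MvPolynomial (Fin 2) K) :=
  Algebra.adjoin K
    {(X 0 : MvPolynomial (Fin 2) K) ^ 4 + X 1 ^ 4,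
     (X 0 : MvPolynomial (Fin 2) K) ^ 2 * X 1 ^ 2}

lemma p_mem : ((X 0 : MvPolynomial (Fin 2) K) ^ 4 + X 1 ^ 4) ∈ Adj K :=
  Algebra.subset_adjoin (by simp)

lemma q_mem : ((X 0 : MvPolynomial (Fin 2) K) ^ 2 * X 1 ^ 2) ∈ Adj K :=
  Algebra.subset_adjoin (by simp)

lemma s_mem (k : ℕ) : ((X 0 : MvPolynomial (Fin 2) K) ^ (4*k) + X 1 ^ (4*k)) ∈ Adj K := by
  have H : ∀ k : ℕ, ((X 0 : MvPolynomial (Fin 2) K) ^ (4*k) + X 1 ^ (4*k)) ∈ Adj K ∧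
      ((X 0 : MvPolynomial (Fin 2) K) ^ (4*(k+1)) + X 1 ^ (4*(k+1))) ∈ Adj K := by
    intro k
    induction k with
    | zero =>
      constructor
      · simpa using Subalgebra.add_mem _ (one_mem _) (one_mem _)
      · simpa using p_mem
    | succ k ih =>
      refine ⟨ih.2, ?_⟩
      have hrec : (X 0 : MvPolynomial (Fin 2) K) ^ (4*(k+1+1)) + X 1 ^ (4*(k+1+1)) =
          ((X 0 : MvPolynomial (Fin 2) K) ^ 4 + X 1 ^ 4) *
            ((X 0 : MvPolynomial (Fin 2) K) ^ (4*(k+1)) + X 1 ^ (4*(k+1)))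
          - ((X 0 : MvPolynomial (Fin 2) K) ^ 2 * X 1 ^ 2) ^ 2 *
            ((X 0 : MvPolynomial (Fin 2) K) ^ (4*k) + X 1 ^ (4*k)) := by ring
      rw [hrec]
      exact Subalgebra.sub_mem _ (Subalgebra.mul_mem _ p_mem ih.2)
        (Subalgebra.mul_mem _ (pow_mem q_mem 2) ih.1)
  exact (H k).1

lemma sym_mem (t k : ℕ) :
    ((X 0 : MvPolynomial (Fin 2) K) ^ (2*t+4*k) * X 1 ^ (2*t)
      + (X 0 : MvPolynomial (Fin 2) K) ^ (2*t) * X 1 ^ (2*t+4*k)) ∈ Adj K := by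
  have : (X 0 : MvPolynomial (Fin 2) K) ^ (2*t+4*k) * X 1 ^ (2*t)
      + (X 0 : MvPolynomial (Fin 2) K) ^ (2*t) * X 1 ^ (2*t+4*k)
      = ((X 0 : MvPolynomial (Fin 2) K) ^ 2 * X 1 ^ 2) ^ t *
        ((X 0 : MvPolynomial (Fin 2) K) ^ (4*k) + X 1 ^ (4*k)) := by ring
  rw [this]
  exact mul_mem (pow_mem q_mem t) (s_mem k)

lemma diag_mem (t : ℕ) :
    ((X 0 : MvPolynomial (Fin 2) K) ^ (2*t) * X 1 ^ (2*t)) ∈ Adj K := by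
  have : (X 0 : MvPolynomial (Fin 2) K) ^ (2*t) * X 1 ^ (2*t)
      = ((X 0 : MvPolynomial (Fin 2) K) ^ 2 * X 1 ^ 2) ^ t := by ring
  rw [this]
  exact pow_mem q_mem t

lemma inv_of_mem {i : K} (hi4 : i ^ 4 = 1) {f : MvPolynomial (Fin 2) K}
    (hf : f ∈ Adj K) :
    aeval ![(X 1 : MvPolynomial (Fin 2) K), X 0] f = f ∧
    aeval ![C (-i) * X 1, C i * X 0] f = f ∧
    aeval ![(X 0 : MvPolynomial (Fin 2) K), -X 1] f = f := by
  have key : ∀ v : Fin 2 → MvPolynomial (Fin 2) K,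
      aeval v ((X 0 : MvPolynomial (Fin 2) K) ^ 4 + X 1 ^ 4) = X 0 ^ 4 + X 1 ^ 4 →
      aeval v ((X 0 : MvPolynomial (Fin 2) K) ^ 2 * X 1 ^ 2) = X 0 ^ 2 * X 1 ^ 2 →
      aeval v f = f := by
    intro v h1 h2
    have hle : Adj K ≤ AlgHom.equalizer (aeval v) (AlgHom.id K (MvPolynomial (Fin 2) K)) := by
      apply Algebra.adjoin_le
      rintro x hx
      simp only [Set.mem_insert_iff, Set.mem_singleton_iff] at hx
      rcases hx with rfl | rfl
      · simpa [AlgHom.mem_equalizer] using h1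
      · simpa [AlgHom.mem_equalizer] using h2
    exact hle hf
  have hC1 : ∀ j : Fin 2, (![(X 1 : MvPolynomial (Fin 2) K), X 0]) j = ![C (1:K) * X 1, C (1:K) * X 0] j := by
    intro j; fin_cases j <;> simp
  refine ⟨key _ ?_ ?_, key _ ?_ ?_, key _ ?_ ?_⟩
  · simp only [map_add, map_pow, aeval_X, Matrix.cons_val_zero, Matrix.cons_val_one,
      Matrix.head_cons]; ring
  · simp only [map_mul, map_pow, aeval_X, Matrix.cons_val_zero, Matrix.cons_val_one,
      Matrix.head_cons]; ring
  · simp only [map_add, map_mul, map_pow, aeval_X, aeval_C, Matrix.cons_val_zero,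
      Matrix.cons_val_one, Matrix.head_cons, MvPolynomial.algebraMap_eq]
    rw [mul_pow, mul_pow, ← C_pow, ← C_pow, show ((-i)^4 : K) = i^4 by ring, hi4, map_one,
      one_mul, one_mul]
    ring
  · simp only [map_add, map_mul, map_pow, aeval_X, aeval_C, Matrix.cons_val_zero,
      Matrix.cons_val_one, Matrix.head_cons, MvPolynomial.algebraMap_eq]
    rw [mul_pow, mul_pow, ← C_pow, ← C_pow]
    rw [show (C ((-i)^2) * X 1 ^ 2 * (C (i^2) * X 0 ^ 2) : MvPolynomial (Fin 2) K)
        = C ((-i)^2 * i^2) * (X 0 ^ 2 * X 1 ^ 2) by rw [C_mul]; ring]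
    rw [show ((-i)^2 * i^2 : K) = 1 by rw [← hi4]; ring, map_one, one_mul]
  · simp only [map_add, map_pow, aeval_X, Matrix.cons_val_zero, Matrix.cons_val_one,
      Matrix.head_cons]
    ring
  · simp only [map_add, map_mul, map_pow, aeval_X, Matrix.cons_val_zero, Matrix.cons_val_one,
      Matrix.head_cons]
    ring

lemma forward (h2K : (2:K) ≠ 0) {i : K} (hi : orderOf i = 4) (f : MvPolynomial (Fin 2) K)
    (ha : aeval ![(X 1 : MvPolynomial (Fin 2) K), X 0] f = f)
    (hb : aeval ![C (-i) * X 1, C i * X 0] f = f)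
    (hc : aeval ![(X 0 : MvPolynomial (Fin 2) K), -X 1] f = f) : f ∈ Adj K := by
  have hi4 : i ^ 4 = 1 := by rw [← hi]; exact pow_orderOf_eq_one i
  suffices H : ∀ N (f : MvPolynomial (Fin 2) K), f.support.card ≤ N →
      aeval ![(X 1 : MvPolynomial (Fin 2) K), X 0] f = f →
      aeval ![C (-i) * X 1, C i * X 0] f = f →
      aeval ![(X 0 : MvPolynomial (Fin 2) K), -X 1] f = f → f ∈ Adj K by
    exact H _ f le_rfl ha hb hc
  intro N
  induction N with
  | zero =>
    intro f hcard _ _ _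
    have : f = 0 := by
      rw [← support_eq_empty, ← Finset.card_eq_zero]
      omega
    rw [this]; exact zero_mem _
  | succ N ih =>
    intro f hcard ha hb hc
    by_cases hf0 : f = 0
    · rw [hf0]; exact zero_mem _
    have csym : ∀ m n, coeff (e m n) f = coeff (e n m) f := by
      intro m n
      conv_lhs => rw [← ha]
      rw [show (![(X 1 : MvPolynomial (Fin 2) K), X 0]) = ![C (1:K) * X 1, C (1:K) * X 0] by
        funext j; fin_cases j <;> simp]
      rw [coeff_swapscale, one_pow, one_pow, one_mul, one_mul]
    have heven : ∀ m n, coeff (e m n) f ≠ 0 → Even n := by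
      intro m n hcne
      by_contra hodd
      have h := congrArg (coeff (e m n)) hc
      rw [show (![(X 0 : MvPolynomial (Fin 2) K), -X 1]) = ![C (1:K) * X 0, C (-1:K) * X 1] by
        funext j; fin_cases j <;> simp] at h
      rw [coeff_scale, one_pow, one_mul, Odd.neg_one_pow (Nat.not_even_iff_odd.mp hodd)] at h
      apply hcne
      have h2 : (2:K) * coeff (e m n) f = 0 := by linear_combination - h
      exact (mul_eq_zero.mp h2).resolve_left h2K
    have hdvd : ∀ m n, coeff (e m n) f ≠ 0 → 4 ∣ m + n := by
      intro m n hcne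
      have hnEv : Even n := heven m n hcne
      have h := congrArg (coeff (e m n)) hb
      rw [coeff_swapscale, ← csym m n] at h
      have hcancel : (-i) ^ n * i ^ m = 1 := by
        have h' : ((-i) ^ n * i ^ m) * coeff (e m n) f = 1 * coeff (e m n) f := by
          rw [one_mul]; linear_combination h
        exact mul_right_cancel₀ hcne h'
      rw [Even.neg_pow hnEv, ← pow_add] at hcancel
      have : orderOf i ∣ n + m := orderOf_dvd_iff_pow_eq_one.mpr hcancel
      rw [hi] at this
      omega
    obtain ⟨d, hd⟩ := Finset.nonempty_iff_ne_empty.mpr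
      (fun hemp => hf0 (support_eq_empty.mp hemp))
    have hdc : coeff (e (d 0) (d 1)) f ≠ 0 := by
      rw [← eq_e d]; exact mem_support_iff.mp hd
    obtain ⟨m, n, hnm, hcne⟩ : ∃ m n : ℕ, n ≤ m ∧ coeff (e m n) f ≠ 0 := by
      rcases le_total (d 1) (d 0) with h | h
      · exact ⟨d 0, d 1, h, hdc⟩
      · exact ⟨d 1, d 0, h, by rw [← csym]; exact hdc⟩
    set c := coeff (e m n) f with hc_def
    have hnEv : Even n := heven m n hcne
    have hmEv : Even m := heven n m (by rw [← csym]; exact hcne)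
    have h4 : 4 ∣ m + n := hdvd m n hcne
    obtain ⟨t, ht⟩ : ∃ t, n = 2 * t := by
      obtain ⟨r, hr⟩ := hnEv; exact ⟨r, by omega⟩
    obtain ⟨k, hk⟩ : ∃ k, m = 2 * t + 4 * k := by
      obtain ⟨j, hj⟩ := h4
      refine ⟨(m - 2*t)/4, by omega⟩
    -- construct g
    obtain ⟨g, hgA, hgcoeff⟩ :
        ∃ g : MvPolynomial (Fin 2) K, g ∈ Adj K ∧
          ∀ u : Fin 2 →₀ ℕ, coeff u g = if u = e m n ∨ u = e n m then c else 0 := by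
      rcases Nat.eq_zero_or_pos k with hk0 | hkpos
      · have hmn : m = n := by omega
        subst hmn
        refine ⟨C c * monomial (e m m) 1, ?_, ?_⟩
        · rw [monomial_e, map_one, one_mul]
          exact mul_mem (Subalgebra.algebraMap_mem (Adj K) c) (by rw [ht]; exact diag_mem t)
        · intro u
          rw [coeff_C_mul, coeff_monomial]
          rcases eq_or_ne u (e m m) with h | h
          · simp [h]
          · rw [if_neg (fun h' => h h'.symm)]
            simp [h]
      · refine ⟨C c * (monomial (e m n) 1 + monomial (e n m) 1), ?_, ?_⟩
        · rw [monomial_e, monomial_e, map_one, one_mul, one_mul]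
          refine mul_mem (Subalgebra.algebraMap_mem (Adj K) c) ?_
          rw [hk, ht]
          exact sym_mem t k
        · intro u
          have hne : e m n ≠ e n m := by
            intro hEq
            obtain ⟨h1, h2⟩ := e_inj.mp hEq
            omega
          rw [coeff_C_mul, coeff_add, coeff_monomial, coeff_monomial]
          by_cases h1 : u = e m n
          · rw [if_pos h1.symm, if_neg (by rw [← h1] at hne; exact fun h' => hne h'.symm)]
            simp [h1]
          · by_cases h2 : u = e n m
            · rw [if_neg (fun h' => h1 h'.symm), if_pos h2.symm]
              simp [h2]
            · rw [if_neg (fun h' => h1 h'.symm), if_neg (fun h' => h2 h'.symm)]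
              simp [h1, h2]
    have hginv := inv_of_mem hi4 hgA
    -- support decreases
    have hsub : (f - g).support ⊆ f.support := by
      intro u hu
      rw [mem_support_iff] at hu ⊢
      intro hfu
      apply hu
      rw [coeff_sub, hfu, hgcoeff u]
      by_cases h1 : u = e m n
      · rw [h1] at hfu; exact absurd hfu hcne
      · by_cases h2 : u = e n m
        · rw [h2] at hfu
          rw [← csym] at hfu
          exact absurd hfu hcne
        · simp [h1, h2]
    have hnotin : e m n ∉ (f - g).support := by
      rw [mem_support_iff]
      push_neg
      rw [coeff_sub, hgcoeff]
      simp [hc_def]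
    have hcard' : (f - g).support.card ≤ N := by
      have hss : (f - g).support ⊂ f.support :=
        ⟨hsub, fun hsup => hnotin (hsup (mem_support_iff.mpr hcne))⟩
      have := Finset.card_lt_card hss
      omega
    have hf' : (f - g) ∈ Adj K := by
      refine ih (f - g) hcard' ?_ ?_ ?_
      · rw [map_sub, ha, hginv.1]
      · rw [map_sub, hb, hginv.2.1]
      · rw [map_sub, hc, hginv.2.2]
    have : f = (f - g) + g := by ring
    rw [this]
    exact add_mem hf' hgA

lemma surj_pair {L : Type*} [Field L] [IsAlgClosed L] (h2L : (2:L) ≠ 0) (s t : L) :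
    ∃ x y : L, x ^ 4 + y ^ 4 = s ∧ x ^ 2 * y ^ 2 = t := by
  obtain ⟨u, hu⟩ := IsAlgClosed.exists_pow_nat_eq (s + 2*t) (n := 2) (by norm_num)
  obtain ⟨v, hv⟩ := IsAlgClosed.exists_pow_nat_eq (s - 2*t) (n := 2) (by norm_num)
  obtain ⟨x, hx⟩ := IsAlgClosed.exists_pow_nat_eq ((u + v)/2) (n := 2) (by norm_num)
  obtain ⟨y, hy⟩ := IsAlgClosed.exists_pow_nat_eq ((u - v)/2) (n := 2) (by norm_num)
  refine ⟨x, y, ?_, ?_⟩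
  · have : x ^ 4 + y ^ 4 = (x^2)^2 + (y^2)^2 := by ring
    rw [this, hx, hy]
    field_simp
    linear_combination 2 * hu + 2 * hv
  · rw [show x ^ 2 * y ^ 2 = (x^2) * (y^2) by ring, hx, hy]
    field_simp
    linear_combination hu - hv

lemma alg_indep (h2K : (2:K) ≠ 0) :
    AlgebraicIndependent K
      ![(X 0 : MvPolynomial (Fin 2) K) ^ 4 + X 1 ^ 4,
        (X 0 : MvPolynomial (Fin 2) K) ^ 2 * X 1 ^ 2] := by
  rw [algebraicIndependent_iff]
  intro P hP
  set L := AlgebraicClosure K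
  have h2L : (2:L) ≠ 0 := fun h =>
    h2K ((algebraMap K L).injective (by rw [map_ofNat, map_zero, h]))
  have key : ∀ s t : L, (aeval ![s, t] : MvPolynomial (Fin 2) K →ₐ[K] L) P = 0 := by
    intro s t
    obtain ⟨x, y, hxs, hxt⟩ := surj_pair h2L s t
    have hfun : (![s, t] : Fin 2 → L) = (fun j => (aeval ![x, y] : MvPolynomial (Fin 2) K →ₐ[K] L)
        (![(X 0 : MvPolynomial (Fin 2) K) ^ 4 + X 1 ^ 4,
           (X 0 : MvPolynomial (Fin 2) K) ^ 2 * X 1 ^ 2] j)) := by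
      funext j
      fin_cases j <;>
        simp [map_add, map_mul, map_pow, aeval_X, ← hxs, ← hxt]
    rw [hfun, ← MvPolynomial.comp_aeval_apply, hP, map_zero]
  have hQ : MvPolynomial.map (algebraMap K L) P = 0 := by
    apply MvPolynomial.funext
    intro v
    have hv : (![v 0, v 1] : Fin 2 → L) = v := by
      funext j; fin_cases j <;> rfl
    have := key (v 0) (v 1)
    rw [hv] at this
    rw [aeval_def, eval₂_eq_eval_map] at this
    rw [this, map_zero]
  exact MvPolynomial.map_injective (σ := Fin 2) (algebraMap K L) (algebraMap K L).injective
    (by rw [hQ, map_zero])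

end Pauli13

open MvPolynomial in
/-- The invariant ring of the Pauli group (generated by `[[0,1],[1,0]]`, `[[0,-i],[i,0]]`,
`[[1,0],[0,-1]]`) acting on `K[x₁,x₂]` is the polynomial ring `K[x₁⁴+x₂⁴, x₁²x₂²]`. -/
theorem stmt_13 {K : Type*} [Field K] (hchar : ((16 : ℕ) : K) ≠ 0)
    (i : K) (hi : orderOf i = 4) :
    (∀ f : MvPolynomial (Fin 2) K,
      (aeval ![(X 1 : MvPolynomial (Fin 2) K), X 0] f = f ∧
       aeval ![C (-i) * X 1, C i * X 0] f = f ∧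
       aeval ![(X 0 : MvPolynomial (Fin 2) K), -X 1] f = f) ↔
      f ∈ Algebra.adjoin K
        {(X 0 : MvPolynomial (Fin 2) K) ^ 4 + X 1 ^ 4,
         (X 0 : MvPolynomial (Fin 2) K) ^ 2 * X 1 ^ 2}) ∧
    AlgebraicIndependent K
      ![(X 0 : MvPolynomial (Fin 2) K) ^ 4 + X 1 ^ 4,
        (X 0 : MvPolynomial (Fin 2) K) ^ 2 * X 1 ^ 2] := by
  have h2K : (2:K) ≠ 0 := by
    intro h
    apply hchar
    have h16 : ((16:ℕ):K) = (2:K)^4 := by norm_num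
    rw [h16, h]
    norm_num
  have hi4 : i ^ 4 = 1 := by rw [← hi]; exact pow_orderOf_eq_one i
  constructor
  · intro f
    constructor
    · rintro ⟨ha, hb, hc⟩
      exact Pauli13.forward h2K hi f ha hb hc
    · intro hf
      exact Pauli13.inv_of_mem hi4 hf
  · exact Pauli13.alg_indep h2K
end

section
/- Let G = Dic₈ × C₂ with its 2-dimensional representation W₁ (a ↦ diag(i,−i), b ↦ [[0,−1],[1,0]], c ↦ I) and W₂ (same a,b; c ↦ −I). For every point (w₁,w₂) ∈ W₁ ⊕ W₂ with w₁ ≠ 0 and w₂ ≠ 0, not all of the polynomials x₁y₁ + x₂y₂, x₁x₂(x₁y₁ − x₂y₂), x₂³y₁ − x₁³y₂ vanish at (w₁,w₂). -/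
/-- For `Dic₈ × C₂` acting on `W₁ ⊕ W₂`: at any point with both components nonzero,
the polynomials `x₁y₁ + x₂y₂`, `x₁x₂(x₁y₁ - x₂y₂)` and `x₂³y₁ - x₁³y₂` do not all
vanish. -/
theorem stmt_19 {K : Type*} [Field K] (hchar : (2 : K) ≠ 0)
    (i : K) (hi : orderOf i = 4)
    (x₁ x₂ y₁ y₂ : K)
    (hx : ¬(x₁ = 0 ∧ x₂ = 0)) (hy : ¬(y₁ = 0 ∧ y₂ = 0)) :
    ¬(x₁ * y₁ + x₂ * y₂ = 0 ∧
      x₁ * x₂ * (x₁ * y₁ - x₂ * y₂) = 0 ∧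
      x₂ ^ 3 * y₁ - x₁ ^ 3 * y₂ = 0) := by
  rintro ⟨h1, h2, h3⟩
  apply hy
  by_cases hx1 : x₁ = 0
  · have hx2 : x₂ ≠ 0 := fun h => hx ⟨hx1, h⟩
    subst hx1
    simp only [zero_mul, zero_add, mul_zero] at h1 h3
    have hy2 : y₂ = 0 := by
      rcases mul_eq_zero.mp h1 with h | h
      · exact absurd h hx2
      · exact h
    have hy1 : y₁ = 0 := by
      have := sub_eq_zero.mp h3
      simp at this
      rcases this with h | h
      · exact absurd h hx2
      · exact h
    exact ⟨hy1, hy2⟩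
  · by_cases hx2 : x₂ = 0
    · subst hx2
      simp only [mul_zero, add_zero, zero_pow, zero_mul, zero_sub, neg_eq_zero, ne_eq, OfNat.ofNat_ne_zero, not_false_eq_true] at h1 h3
      have hy1 : y₁ = 0 := by
        rcases mul_eq_zero.mp h1 with h | h
        · exact absurd h hx1
        · exact h
      have hy2 : y₂ = 0 := by
        rcases mul_eq_zero.mp h3 with h | h
        · exact absurd (pow_eq_zero_iff (by norm_num) |>.mp h) hx1
        · exact h
      exact ⟨hy1, hy2⟩
    · -- x₁ ≠ 0, x₂ ≠ 0
      have hd : x₁ * y₁ - x₂ * y₂ = 0 := by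
        rcases mul_eq_zero.mp h2 with h | h
        · rcases mul_eq_zero.mp h with h | h
          · exact absurd h hx1
          · exact absurd h hx2
        · exact h
      have hy1 : y₁ = 0 := by
        have h4 : (2 : K) * (x₁ * y₁) = 0 := by linear_combination h1 + hd
        have := mul_eq_zero.mp h4
        rcases this with h | h
        · exact absurd h hchar
        · rcases mul_eq_zero.mp h with h | h
          · exact absurd h hx1
          · exact h
      have hy2 : y₂ = 0 := by
        have h4 : (2 : K) * (x₂ * y₂) = 0 := by linear_combination h1 - hd
        rcases mul_eq_zero.mp h4 with h | h
        · exact absurd h hchar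
        · rcases mul_eq_zero.mp h with h | h
          · exact absurd h hx2
          · exact h
      exact ⟨hy1, hy2⟩
end
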